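/- arXiv:1903.02214 — 8 statements merged into one kernel-verified Lean document; each statement's English description precedes it below -/
import Mathlib

section
/- Let X be a real Banach space, let L : X → X be a continuous linear map with operator norm ‖L‖ < 1, and let B : X × X → X be a continuous bilinear map with norm ‖B‖ := sup{‖B(x,y)‖ : ‖x‖ ≤ 1, ‖y‖ ≤ 1} satisfying ‖B‖ > 0. If x₀ ∈ X satisfies ‖x₀‖ < (1−‖L‖)²/(4‖B‖), then there exists a unique x in the closed ball of center 0 and radius (1−‖L‖)/(2‖B‖) such that x = x₀ + L x + B(x,x). -/
set_option maxHeartbeats 1000000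


/-- Fixed point lemma (Lemma 2.2, existence and uniqueness part): if `L` is a continuous
linear map with operator norm `< 1` and `B` a continuous bilinear map with positive norm,
then for `‖x₀‖ < (1-‖L‖)²/(4‖B‖)` the equation `x = x₀ + L x + B(x,x)` has a unique
solution in the closed ball of center `0` and radius `(1-‖L‖)/(2‖B‖)`. -/
theorem stmt_0 {X : Type*} [NormedAddCommGroup X] [NormedSpace ℝ X] [CompleteSpace X]
    (L : X →L[ℝ] X) (B : X →L[ℝ] X →L[ℝ] X)
    (hL : ‖L‖ < 1) (hB : 0 < ‖B‖) (x₀ : X)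
    (hx₀ : ‖x₀‖ < (1 - ‖L‖) ^ 2 / (4 * ‖B‖)) :
    ∃! x : X, x ∈ Metric.closedBall (0 : X) ((1 - ‖L‖) / (2 * ‖B‖)) ∧
      x = x₀ + L x + B x x := by
  set k : ℝ := 1 - ‖L‖ with hk_def
  have hk : 0 < k := by simp [hk_def]; linarith
  have hL0 : 0 ≤ ‖L‖ := norm_nonneg _
  set a : ℝ := ‖x₀‖ with ha_def
  have ha0 : 0 ≤ a := norm_nonneg _
  have ha : a < k ^ 2 / (4 * ‖B‖) := hx₀
  have hdisc : 0 < k ^ 2 - 4 * ‖B‖ * a := by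
    have h := (lt_div_iff₀ (by positivity : (0:ℝ) < 4 * ‖B‖)).mp ha
    nlinarith
  set D : ℝ := Real.sqrt (k ^ 2 - 4 * ‖B‖ * a) with hD_def
  have hD0 : 0 < D := Real.sqrt_pos.mpr hdisc
  have hD2 : D ^ 2 = k ^ 2 - 4 * ‖B‖ * a := Real.sq_sqrt hdisc.le
  have hDk : D ≤ k := by nlinarith
  set r' : ℝ := (k - D) / (2 * ‖B‖) with hr'_def
  set r : ℝ := k / (2 * ‖B‖) with hr_def
  have hr'0 : 0 ≤ r' := by apply div_nonneg (by linarith) (by positivity)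
  have hr'r : r' < r := by
    exact (div_lt_div_iff_of_pos_right (by positivity)).mpr (by linarith)
  set f : X → X := fun x => x₀ + L x + B x x with hf_def
  -- key difference estimate
  have hdiff : ∀ x y : X, ‖f x - f y‖ ≤ (‖L‖ + ‖B‖ * (‖x‖ + ‖y‖)) * ‖x - y‖ := by
    intro x y
    have h1 : f x - f y = L (x - y) + (B x (x - y) + B (x - y) y) := by
      simp only [hf_def, map_sub, ContinuousLinearMap.sub_apply, map_sub]
      abel
    calc ‖f x - f y‖ = ‖L (x - y) + (B x (x - y) + B (x - y) y)‖ := by rw [h1]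
      _ ≤ ‖L (x - y)‖ + (‖B x (x - y)‖ + ‖B (x - y) y‖) :=
          (norm_add_le _ _).trans (by gcongr; exact norm_add_le _ _)
      _ ≤ ‖L‖ * ‖x - y‖ + (‖B‖ * ‖x‖ * ‖x - y‖ + ‖B‖ * ‖x - y‖ * ‖y‖) := by
          gcongr
          · exact L.le_opNorm _
          · exact (B x).le_opNorm _ |>.trans (by gcongr; exact B.le_opNorm x)
          · exact (B (x - y)).le_opNorm y |>.trans (by gcongr; exact B.le_opNorm _)
      _ = (‖L‖ + ‖B‖ * (‖x‖ + ‖y‖)) * ‖x - y‖ := by ring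
  -- norm bound for f
  have hfb : ∀ x : X, ‖f x‖ ≤ a + ‖L‖ * ‖x‖ + ‖B‖ * ‖x‖ ^ 2 := by
    intro x
    calc ‖f x‖ ≤ ‖x₀‖ + ‖L x‖ + ‖B x x‖ := by
          exact (norm_add_le _ _).trans (by gcongr; exact norm_add_le _ _)
      _ ≤ a + ‖L‖ * ‖x‖ + ‖B‖ * ‖x‖ ^ 2 := by
          gcongr
          · exact L.le_opNorm x
          · calc ‖B x x‖ ≤ ‖B x‖ * ‖x‖ := (B x).le_opNorm x
              _ ≤ ‖B‖ * ‖x‖ * ‖x‖ := by gcongr; exact B.le_opNorm x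
              _ = ‖B‖ * ‖x‖ ^ 2 := by ring
  -- r' is a root: ‖B‖ r'^2 - k r' + a = 0
  have hroot : ‖B‖ * r' ^ 2 - k * r' + a = 0 := by
    have h2B : (2 * ‖B‖) ≠ 0 := by positivity
    have hr2 : 2 * ‖B‖ * r' = k - D := by rw [hr'_def]; field_simp
    have h4 : 4 * ‖B‖ * (‖B‖ * r' ^ 2 - k * r' + a) = 0 := by
      linear_combination (2 * ‖B‖ * r' - k - D) * hr2 + hD2
    rcases mul_eq_zero.mp h4 with h | h
    · exact absurd h (by positivity)
    · exact h
  -- maps closed ball r' to itself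
  have hmaps : Set.MapsTo f (Metric.closedBall (0 : X) r') (Metric.closedBall (0 : X) r') := by
    intro x hx
    rw [Metric.mem_closedBall, dist_zero_right] at hx ⊢
    have hxn : 0 ≤ ‖x‖ := norm_nonneg x
    have h1 := hfb x
    have h2 : ‖L‖ * ‖x‖ ≤ ‖L‖ * r' := mul_le_mul_of_nonneg_left hx hL0
    have h3 : ‖B‖ * ‖x‖ ^ 2 ≤ ‖B‖ * r' ^ 2 := by
      apply mul_le_mul_of_nonneg_left ?_ hB.le
      exact pow_le_pow_left₀ hxn hx 2
    have hkr' : k * r' = r' - ‖L‖ * r' := by rw [hk_def]; ring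
    linarith [hroot]
  -- contraction constant
  set c : ℝ := ‖L‖ + 2 * ‖B‖ * r' with hc_def
  have hc0 : 0 ≤ c := by positivity
  have hc1 : c < 1 := by
    have : 2 * ‖B‖ * r' = k - D := by rw [hr'_def]; field_simp
    rw [hc_def, this]; simp [hk_def]; linarith
  have hKlt : c.toNNReal < 1 := by
    rw [← NNReal.coe_lt_coe, Real.coe_toNNReal _ hc0]; exact_mod_cast hc1
  have hsc : IsComplete (Metric.closedBall (0 : X) r') :=
    Metric.isClosed_closedBall.isComplete
  have hcontr : ContractingWith c.toNNReal (hmaps.restrict f _ _) := by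
    refine ⟨hKlt, LipschitzWith.of_dist_le_mul fun x y => ?_⟩
    have hx := x.2
    have hy := y.2
    rw [Metric.mem_closedBall, dist_zero_right] at hx hy
    have key : ‖f x.1 - f y.1‖ ≤ c * ‖x.1 - y.1‖ := by
      refine (hdiff x.1 y.1).trans ?_
      have : ‖L‖ + ‖B‖ * (‖x.1‖ + ‖y.1‖) ≤ c := by rw [hc_def]; nlinarith
      exact mul_le_mul_of_nonneg_right this (norm_nonneg _)
    simpa [Subtype.dist_eq, dist_eq_norm, Real.coe_toNNReal _ hc0] using key
  have h0mem : (0 : X) ∈ Metric.closedBall (0 : X) r' := by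
    simpa using hr'0
  obtain ⟨y, hymem, hyfix, -, -⟩ :=
    hcontr.exists_fixedPoint' hsc hmaps h0mem (edist_ne_top _ _)
  -- any fixed point in the big ball has norm < r
  have hsmall : ∀ z : X, z ∈ Metric.closedBall (0 : X) r → z = f z → ‖z‖ < r := by
    intro z hz hzfix
    rw [Metric.mem_closedBall, dist_zero_right] at hz
    have hb := hfb z
    rw [← hzfix] at hb
    by_contra h
    push_neg at h
    have hzr : ‖z‖ = r := le_antisymm hz h
    rw [hzr] at hb
    have hkr : k * r = r - ‖L‖ * r := by rw [hk_def]; ring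
    have hrval : k * r - ‖B‖ * r ^ 2 = k ^ 2 / (4 * ‖B‖) := by
      rw [hr_def]; field_simp; ring
    linarith
  have hrr' : r' ≤ r := hr'r.le
  have hyball : y ∈ Metric.closedBall (0 : X) r :=
    Metric.closedBall_subset_closedBall hrr' hymem
  have hyeq : y = x₀ + L y + B y y := hyfix.symm
  refine ⟨y, ⟨hyball, hyeq⟩, ?_⟩
  rintro z ⟨hzball, hzeq⟩
  have hzn : ‖z‖ < r := hsmall z hzball hzeq
  have hyn : ‖y‖ < r := hsmall y hyball hyeq
  have hd := hdiff z y
  have hfz : f z = z := by simp only [hf_def]; exact hzeq.symm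
  have hfy : f y = y := hyfix
  rw [hfz, hfy] at hd
  have hcoef : ‖L‖ + ‖B‖ * (‖z‖ + ‖y‖) < 1 := by
    have h2r : ‖B‖ * (2 * r) = k := by rw [hr_def]; field_simp
    nlinarith
  by_contra hne
  have hn : 0 < ‖z - y‖ := norm_pos_iff.mpr (sub_ne_zero.mpr hne)
  have hlt := mul_lt_mul_of_pos_right hcoef hn
  rw [one_mul] at hlt
  linarith
end

section
/- Let d ≥ 2 be an integer and suppose f₁, f₂ : ℝ^d → ℝ are measurable and polynomially bounded, i.e. there exist C₀ ≥ 0 and q₀ ≥ 0 such that |fᵢ(v)| ≤ C₀ (1+|v|)^{q₀} for all v ∈ ℝ^d and i = 1,2. Then there exist constants C ≥ 0 and q ≥ 0 such that for all v ∈ ℝ^d, |Γ(M^{1/2} f₁, M^{1/2} f₂)(v)| ≤ C M^{1/2}(v) (1+|v|)^q. In particular, for every k ≥ 0, sup_{v ∈ ℝ^d} ⟨v⟩^k |Γ(M^{1/2} f₁, M^{1/2} f₂)(v)| < ∞. -/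
set_option maxHeartbeats 1000000


open MeasureTheory

/-- The normalized Maxwellian `M(v) = (2π)^{-d/2} exp(-|v|²/2)` on `ℝ^d`. -/
noncomputable def Maxwellian (d : ℕ) (v : EuclideanSpace ℝ (Fin d)) : ℝ :=
  (2 * Real.pi) ^ (-(d : ℝ) / 2) * Real.exp (-‖v‖ ^ 2 / 2)

/-- Post-collisional velocity `v' = (v+v_*)/2 + (|v-v_*|/2) σ`. -/
noncomputable def vPost (d : ℕ) (v vs σ : EuclideanSpace ℝ (Fin d)) :
    EuclideanSpace ℝ (Fin d) :=
  (2⁻¹ : ℝ) • (v + vs) + (‖v - vs‖ / 2) • σ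

/-- Post-collisional velocity `v'_* = (v+v_*)/2 - (|v-v_*|/2) σ`. -/
noncomputable def vPostStar (d : ℕ) (v vs σ : EuclideanSpace ℝ (Fin d)) :
    EuclideanSpace ℝ (Fin d) :=
  (2⁻¹ : ℝ) • (v + vs) - (‖v - vs‖ / 2) • σ

/-- The surface measure on the unit sphere `𝕊^{d-1} ⊂ ℝ^d`. -/
noncomputable def sphereMeasure (d : ℕ) :
    Measure (Metric.sphere (0 : EuclideanSpace ℝ (Fin d)) 1) :=
  (volume : Measure (EuclideanSpace ℝ (Fin d))).toSphere

/-- The hard-spheres Boltzmann collision operator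
`Q(g,f)(v) = ∫ |v-v_*| (g(v'_*) f(v') - g(v_*) f(v)) dσ dv_*`. -/
noncomputable def collisionQ (d : ℕ) (g f : EuclideanSpace ℝ (Fin d) → ℝ)
    (v : EuclideanSpace ℝ (Fin d)) : ℝ :=
  ∫ p : EuclideanSpace ℝ (Fin d) × Metric.sphere (0 : EuclideanSpace ℝ (Fin d)) 1,
      ‖v - p.1‖ * (g (vPostStar d v p.1 (p.2 : EuclideanSpace ℝ (Fin d))) *
          f (vPost d v p.1 (p.2 : EuclideanSpace ℝ (Fin d))) -
        g p.1 * f v)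
    ∂((volume : Measure (EuclideanSpace ℝ (Fin d))).prod (sphereMeasure d))

/-- The linearized collision operator
`Γ(h₁,h₂) = ½ M^{-1/2} (Q(M^{1/2}h₁, M^{1/2}h₂) + Q(M^{1/2}h₂, M^{1/2}h₁))`. -/
noncomputable def gammaOp (d : ℕ) (h₁ h₂ : EuclideanSpace ℝ (Fin d) → ℝ)
    (v : EuclideanSpace ℝ (Fin d)) : ℝ :=
  (1 / 2) * (Real.sqrt (Maxwellian d v))⁻¹ *
    (collisionQ d (fun w => Real.sqrt (Maxwellian d w) * h₁ w)
        (fun w => Real.sqrt (Maxwellian d w) * h₂ w) v +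
      collisionQ d (fun w => Real.sqrt (Maxwellian d w) * h₂ w)
        (fun w => Real.sqrt (Maxwellian d w) * h₁ w) v)

section Aux

variable {d : ℕ}

lemma maxwellian_pos (v : EuclideanSpace ℝ (Fin d)) : 0 < Maxwellian d v := by
  unfold Maxwellian; positivity

lemma sqrt_maxwellian_sq (v : EuclideanSpace ℝ (Fin d)) :
    Real.sqrt (Maxwellian d v) * Real.sqrt (Maxwellian d v) = Maxwellian d v :=
  Real.mul_self_sqrt (maxwellian_pos v).le

lemma one_add_rpow_le_exp {t s : ℝ} (ht : 0 ≤ t) (hs : 0 ≤ s) :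
    (1 + t) ^ s ≤ Real.exp (s * t) := by
  rw [Real.rpow_def_of_pos (by linarith)]
  apply Real.exp_le_exp.2
  have hlog : Real.log (1 + t) ≤ t := by
    have := Real.log_le_sub_one_of_pos (show (0:ℝ) < 1 + t by linarith)
    linarith
  calc Real.log (1 + t) * s ≤ t * s := mul_le_mul_of_nonneg_right hlog hs
    _ = s * t := mul_comm _ _

lemma integrable_gauss4 :
    Integrable (fun w : EuclideanSpace ℝ (Fin d) => Real.exp (-(4⁻¹) * ‖w‖ ^ 2)) := by
  have base := (GaussianFourier.integrable_cexp_neg_mul_sq_norm_add (V := EuclideanSpace ℝ (Fin d))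
      (b := (4⁻¹ : ℂ)) (by norm_num) 0 0).norm
  apply base.congr
  filter_upwards with v
  rw [Complex.norm_exp]
  simp [← Complex.ofReal_pow]

lemma integrable_maxwellian_poly (s : ℝ) (hs : 0 ≤ s) :
    Integrable (fun w : EuclideanSpace ℝ (Fin d) => Maxwellian d w * (1 + ‖w‖) ^ s) := by
  have cont : Continuous fun w : EuclideanSpace ℝ (Fin d) =>
      Maxwellian d w * (1 + ‖w‖) ^ s := by
    unfold Maxwellian
    apply Continuous.mul
    · exact continuous_const.mul (Real.continuous_exp.comp (by fun_prop))
    · exact (continuous_const.add continuous_norm).rpow_const (fun w => Or.inr hs)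
  refine (integrable_gauss4.const_mul
      ((2 * Real.pi) ^ (-(d:ℝ)/2) * Real.exp (s ^ 2))).mono
    cont.aestronglyMeasurable ?_
  filter_upwards with w
  unfold Maxwellian
  rw [Real.norm_eq_abs, Real.norm_eq_abs, abs_of_nonneg (by positivity),
    abs_of_nonneg (by positivity)]
  have h1 : (1 + ‖w‖) ^ s ≤ Real.exp (s * ‖w‖) := one_add_rpow_le_exp (norm_nonneg w) hs
  calc (2 * Real.pi) ^ (-(d:ℝ)/2) * Real.exp (-‖w‖^2/2) * (1+‖w‖)^s
      ≤ (2 * Real.pi) ^ (-(d:ℝ)/2) * Real.exp (-‖w‖^2/2) * Real.exp (s * ‖w‖) := by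
        gcongr
    _ = (2 * Real.pi) ^ (-(d:ℝ)/2) * Real.exp (-‖w‖^2/2 + s * ‖w‖) := by
        rw [mul_assoc, ← Real.exp_add]
    _ ≤ (2 * Real.pi) ^ (-(d:ℝ)/2) * Real.exp (s^2 + -(4⁻¹) * ‖w‖^2) := by
        apply mul_le_mul_of_nonneg_left _ (by positivity)
        exact Real.exp_le_exp.2 (by nlinarith [sq_nonneg (s - ‖w‖/2)])
    _ = (2 * Real.pi) ^ (-(d:ℝ)/2) * Real.exp (s^2) * Real.exp (-(4⁻¹) * ‖w‖^2) := by
        rw [mul_assoc, ← Real.exp_add]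

lemma energy (v vs σ : EuclideanSpace ℝ (Fin d)) (hσ : ‖σ‖ = 1) :
    ‖vPost d v vs σ‖ ^ 2 + ‖vPostStar d v vs σ‖ ^ 2 = ‖v‖ ^ 2 + ‖vs‖ ^ 2 := by
  unfold vPost vPostStar
  have h1 := norm_add_sq_real ((2⁻¹ : ℝ) • (v + vs)) ((‖v - vs‖ / 2) • σ)
  have h2 := norm_sub_sq_real ((2⁻¹ : ℝ) • (v + vs)) ((‖v - vs‖ / 2) • σ)
  have h3 : ‖(2⁻¹ : ℝ) • (v + vs)‖ = 2⁻¹ * ‖v + vs‖ := by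
    rw [norm_smul]; norm_num
  have h4 : ‖(‖v - vs‖ / 2) • σ‖ = ‖v - vs‖ / 2 := by
    rw [norm_smul, hσ, mul_one, Real.norm_eq_abs, abs_of_nonneg (by positivity)]
  have h5 := norm_add_sq_real v vs
  have h6 := norm_sub_sq_real v vs
  rw [h3, h4] at h1 h2
  nlinarith [h1, h2, h5, h6]

lemma post_norm_le (v vs σ : EuclideanSpace ℝ (Fin d)) (hσ : ‖σ‖ = 1) :
    ‖vPost d v vs σ‖ ≤ ‖v‖ + ‖vs‖ ∧ ‖vPostStar d v vs σ‖ ≤ ‖v‖ + ‖vs‖ := by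
  have h3 : ‖(2⁻¹ : ℝ) • (v + vs)‖ ≤ 2⁻¹ * (‖v‖ + ‖vs‖) := by
    rw [norm_smul]
    simp only [norm_inv, Real.norm_ofNat]
    gcongr
    exact norm_add_le v vs
  have h4 : ‖(‖v - vs‖ / 2) • σ‖ ≤ (‖v‖ + ‖vs‖) / 2 := by
    rw [norm_smul, hσ, mul_one, Real.norm_eq_abs, abs_of_nonneg (by positivity)]
    have := norm_sub_le v vs
    linarith
  constructor
  · calc ‖vPost d v vs σ‖ ≤ ‖(2⁻¹ : ℝ) • (v + vs)‖ + ‖(‖v - vs‖ / 2) • σ‖ := norm_add_le _ _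
      _ ≤ ‖v‖ + ‖vs‖ := by linarith
  · calc ‖vPostStar d v vs σ‖ ≤ ‖(2⁻¹ : ℝ) • (v + vs)‖ + ‖(‖v - vs‖ / 2) • σ‖ := norm_sub_le _ _
      _ ≤ ‖v‖ + ‖vs‖ := by linarith

lemma maxwellian_post_mul (v vs σ : EuclideanSpace ℝ (Fin d)) (hσ : ‖σ‖ = 1) :
    Maxwellian d (vPost d v vs σ) * Maxwellian d (vPostStar d v vs σ) =
      Maxwellian d v * Maxwellian d vs := by
  have h := energy v vs σ hσ
  unfold Maxwellian
  rw [mul_mul_mul_comm, ← Real.exp_add, mul_mul_mul_comm, ← Real.exp_add]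
  congr 1
  rw [Real.exp_eq_exp]
  linarith

lemma collisionQ_bound (G F : EuclideanSpace ℝ (Fin d) → ℝ) (C₀ q₀ : ℝ)
    (hC₀ : 0 ≤ C₀) (hq₀ : 0 ≤ q₀)
    (hG : ∀ w, |G w| ≤ C₀ * Maxwellian d w * (1 + ‖w‖) ^ q₀)
    (hF : ∀ w, |F w| ≤ C₀ * Maxwellian d w * (1 + ‖w‖) ^ q₀) :
    ∃ A, 0 ≤ A ∧ ∀ v, |collisionQ d G F v| ≤
      A * Maxwellian d v * (1 + ‖v‖) ^ (2 * q₀ + 1) := by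
  haveI : IsFiniteMeasure (sphereMeasure d) := by unfold sphereMeasure; infer_instance
  set r : ℝ := 2 * q₀ + 1 with hr_def
  have hr : 0 ≤ r := by positivity
  set I : ℝ := ∫ w : EuclideanSpace ℝ (Fin d), Maxwellian d w * (1 + ‖w‖) ^ r with hI_def
  have hI : 0 ≤ I := integral_nonneg fun w => by
    have := (maxwellian_pos (d := d) w).le; positivity
  set S : ℝ := (sphereMeasure d Set.univ).toReal with hS_def
  have hS : 0 ≤ S := ENNReal.toReal_nonneg
  refine ⟨2 * C₀ ^ 2 * S * I, by positivity, fun v => ?_⟩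
  set Kv : ℝ := 2 * C₀ ^ 2 * Maxwellian d v * (1 + ‖v‖) ^ r with hKv_def
  have hKv : 0 ≤ Kv := by
    have := (maxwellian_pos (d := d) v).le; positivity
  have hint : Integrable
      (fun p : EuclideanSpace ℝ (Fin d) × Metric.sphere (0 : EuclideanSpace ℝ (Fin d)) 1 =>
        (Kv * (Maxwellian d p.1 * (1 + ‖p.1‖) ^ r)) * (1 : ℝ))
      ((volume : Measure (EuclideanSpace ℝ (Fin d))).prod (sphereMeasure d)) :=
    ((integrable_maxwellian_poly r hr).const_mul Kv).mul_prod (integrable_const 1)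
  have hbound : ∀ p : EuclideanSpace ℝ (Fin d) × Metric.sphere (0 : EuclideanSpace ℝ (Fin d)) 1,
      ‖‖v - p.1‖ * (G (vPostStar d v p.1 (p.2 : EuclideanSpace ℝ (Fin d))) *
          F (vPost d v p.1 (p.2 : EuclideanSpace ℝ (Fin d))) - G p.1 * F v)‖ ≤
        (Kv * (Maxwellian d p.1 * (1 + ‖p.1‖) ^ r)) * (1 : ℝ) := by
    intro p
    obtain ⟨vs, σ'⟩ := p
    set σ : EuclideanSpace ℝ (Fin d) := (σ' : EuclideanSpace ℝ (Fin d))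
    have hσ : ‖σ‖ = 1 := norm_eq_of_mem_sphere σ'
    set P : ℝ := (1 + ‖v‖) * (1 + ‖vs‖) with hP_def
    have hP1 : 1 ≤ P := by nlinarith [norm_nonneg v, norm_nonneg vs]
    have hP0 : 0 < P := lt_of_lt_of_le one_pos hP1
    have hnorm : ‖v - vs‖ ≤ P := by
      have := norm_sub_le v vs
      nlinarith [norm_nonneg v, norm_nonneg vs]
    have hple := post_norm_le v vs σ hσ
    have hb1 : (1 + ‖vPostStar d v vs σ‖) ^ q₀ ≤ P ^ q₀ := by
      apply Real.rpow_le_rpow (by positivity) _ hq₀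
      nlinarith [hple.2, norm_nonneg v, norm_nonneg vs]
    have hb2 : (1 + ‖vPost d v vs σ‖) ^ q₀ ≤ P ^ q₀ := by
      apply Real.rpow_le_rpow (by positivity) _ hq₀
      nlinarith [hple.1, norm_nonneg v, norm_nonneg vs]
    have hPq : P ^ q₀ * P ^ q₀ = P ^ (2 * q₀) := by
      rw [← Real.rpow_add hP0]; ring_nf
    have hgain : |G (vPostStar d v vs σ)| * |F (vPost d v vs σ)| ≤
        C₀ ^ 2 * (Maxwellian d v * Maxwellian d vs) * P ^ (2 * q₀) := by
      calc |G (vPostStar d v vs σ)| * |F (vPost d v vs σ)|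
          ≤ (C₀ * Maxwellian d (vPostStar d v vs σ) * (1 + ‖vPostStar d v vs σ‖) ^ q₀) *
            (C₀ * Maxwellian d (vPost d v vs σ) * (1 + ‖vPost d v vs σ‖) ^ q₀) := by
            apply mul_le_mul (hG _) (hF _) (abs_nonneg _)
            have := (maxwellian_pos (d := d) (vPostStar d v vs σ)).le
            positivity
        _ ≤ (C₀ * Maxwellian d (vPostStar d v vs σ) * P ^ q₀) *
            (C₀ * Maxwellian d (vPost d v vs σ) * P ^ q₀) := by
            have m1 := (maxwellian_pos (d := d) (vPostStar d v vs σ)).le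
            have m2 := (maxwellian_pos (d := d) (vPost d v vs σ)).le
            gcongr
        _ = C₀ ^ 2 * (Maxwellian d (vPost d v vs σ) * Maxwellian d (vPostStar d v vs σ)) *
            (P ^ q₀ * P ^ q₀) := by ring
        _ = C₀ ^ 2 * (Maxwellian d v * Maxwellian d vs) * P ^ (2 * q₀) := by
            rw [maxwellian_post_mul v vs σ hσ, hPq]
    have hloss : |G vs| * |F v| ≤
        C₀ ^ 2 * (Maxwellian d v * Maxwellian d vs) * P ^ (2 * q₀) := by
      calc |G vs| * |F v|
          ≤ (C₀ * Maxwellian d vs * (1 + ‖vs‖) ^ q₀) * (C₀ * Maxwellian d v * (1 + ‖v‖) ^ q₀) := by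
            apply mul_le_mul (hG _) (hF _) (abs_nonneg _)
            have := (maxwellian_pos (d := d) vs).le
            positivity
        _ = C₀ ^ 2 * (Maxwellian d v * Maxwellian d vs) * ((1 + ‖vs‖) ^ q₀ * (1 + ‖v‖) ^ q₀) := by
            ring
        _ = C₀ ^ 2 * (Maxwellian d v * Maxwellian d vs) * P ^ q₀ := by
            rw [hP_def, Real.mul_rpow (by positivity) (by positivity)]; ring
        _ ≤ C₀ ^ 2 * (Maxwellian d v * Maxwellian d vs) * P ^ (2 * q₀) := by
            have := (maxwellian_pos (d := d) v).le
            have := (maxwellian_pos (d := d) vs).le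
            apply mul_le_mul_of_nonneg_left _ (by positivity)
            exact Real.rpow_le_rpow_of_exponent_le hP1 (by linarith)
    have habs : |G (vPostStar d v vs σ) * F (vPost d v vs σ) - G vs * F v| ≤
        |G (vPostStar d v vs σ)| * |F (vPost d v vs σ)| + |G vs| * |F v| := by
      calc |G (vPostStar d v vs σ) * F (vPost d v vs σ) - G vs * F v|
          ≤ |G (vPostStar d v vs σ) * F (vPost d v vs σ)| + |G vs * F v| := abs_sub _ _
        _ = _ := by rw [abs_mul, abs_mul]
    rw [Real.norm_eq_abs, abs_mul, abs_of_nonneg (norm_nonneg _), mul_one]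
    calc ‖v - vs‖ * |G (vPostStar d v vs σ) * F (vPost d v vs σ) - G vs * F v|
        ≤ P * (2 * (C₀ ^ 2 * (Maxwellian d v * Maxwellian d vs) * P ^ (2 * q₀))) := by
          apply mul_le_mul hnorm _ (abs_nonneg _) hP0.le
          linarith [habs, hgain, hloss]
      _ = (2 * C₀ ^ 2 * Maxwellian d v * Maxwellian d vs) * (P ^ (2 * q₀) * P) := by ring
      _ = (2 * C₀ ^ 2 * Maxwellian d v * Maxwellian d vs) * P ^ r := by
          rw [hr_def, Real.rpow_add_one hP0.ne']
      _ = Kv * (Maxwellian d vs * (1 + ‖vs‖) ^ r) := by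
          rw [hKv_def, hP_def, Real.mul_rpow (by positivity) (by positivity)]; ring
  have hQ : |collisionQ d G F v| ≤ S * (Kv * I) := by
    have h := norm_integral_le_of_norm_le hint (Filter.Eventually.of_forall hbound)
    rw [Real.norm_eq_abs] at h
    refine le_trans h (le_of_eq ?_)
    simp only [mul_one]
    have hff := MeasureTheory.integral_fun_fst
      (μ := (volume : Measure (EuclideanSpace ℝ (Fin d)))) (ν := sphereMeasure d)
      (f := fun w => Kv * (Maxwellian d w * (1 + ‖w‖) ^ r))
    rw [hff, integral_const_mul]
    simp [hS_def, smul_eq_mul, hI_def, Measure.real]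
  calc |collisionQ d G F v| ≤ S * (Kv * I) := hQ
    _ = 2 * C₀ ^ 2 * S * I * Maxwellian d v * (1 + ‖v‖) ^ r := by rw [hKv_def]; ring

end Aux

/-- Lemma B.3: if `f₁, f₂` are measurable and polynomially bounded, then
`Γ(M^{1/2}f₁, M^{1/2}f₂)` is bounded by `C M^{1/2}(v) (1+|v|)^q`; in particular it belongs
to `L^{∞,k}_v` for every `k ≥ 0`. -/
theorem stmt_6 (d : ℕ) (hd : 2 ≤ d)
    (f₁ f₂ : EuclideanSpace ℝ (Fin d) → ℝ)
    (hm₁ : Measurable f₁) (hm₂ : Measurable f₂)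
    (C₀ q₀ : ℝ) (hC₀ : 0 ≤ C₀) (hq₀ : 0 ≤ q₀)
    (hf₁ : ∀ v, |f₁ v| ≤ C₀ * (1 + ‖v‖) ^ q₀)
    (hf₂ : ∀ v, |f₂ v| ≤ C₀ * (1 + ‖v‖) ^ q₀) :
    (∃ C : ℝ, 0 ≤ C ∧ ∃ q : ℝ, 0 ≤ q ∧
        ∀ v, |gammaOp d (fun w => Real.sqrt (Maxwellian d w) * f₁ w)
            (fun w => Real.sqrt (Maxwellian d w) * f₂ w) v| ≤
          C * Real.sqrt (Maxwellian d v) * (1 + ‖v‖) ^ q) ∧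
      ∀ k : ℝ, 0 ≤ k → ∃ C' : ℝ,
        ∀ v, (1 + ‖v‖) ^ k *
            |gammaOp d (fun w => Real.sqrt (Maxwellian d w) * f₁ w)
              (fun w => Real.sqrt (Maxwellian d w) * f₂ w) v| ≤ C' := by
  have key : ∀ (f : EuclideanSpace ℝ (Fin d) → ℝ), (∀ v, |f v| ≤ C₀ * (1 + ‖v‖) ^ q₀) →
      ∀ w, |Real.sqrt (Maxwellian d w) * (Real.sqrt (Maxwellian d w) * f w)| ≤
        C₀ * Maxwellian d w * (1 + ‖w‖) ^ q₀ := by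
    intro f hf w
    rw [abs_mul, abs_mul, abs_of_nonneg (Real.sqrt_nonneg _), ← mul_assoc,
      sqrt_maxwellian_sq]
    calc Maxwellian d w * |f w| ≤ Maxwellian d w * (C₀ * (1 + ‖w‖) ^ q₀) :=
        mul_le_mul_of_nonneg_left (hf w) (maxwellian_pos w).le
      _ = C₀ * Maxwellian d w * (1 + ‖w‖) ^ q₀ := by ring
  obtain ⟨A₁, hA₁, hQ₁⟩ := collisionQ_bound
    (fun w => Real.sqrt (Maxwellian d w) * (Real.sqrt (Maxwellian d w) * f₁ w))
    (fun w => Real.sqrt (Maxwellian d w) * (Real.sqrt (Maxwellian d w) * f₂ w))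
    C₀ q₀ hC₀ hq₀ (key f₁ hf₁) (key f₂ hf₂)
  obtain ⟨A₂, hA₂, hQ₂⟩ := collisionQ_bound
    (fun w => Real.sqrt (Maxwellian d w) * (Real.sqrt (Maxwellian d w) * f₂ w))
    (fun w => Real.sqrt (Maxwellian d w) * (Real.sqrt (Maxwellian d w) * f₁ w))
    C₀ q₀ hC₀ hq₀ (key f₂ hf₂) (key f₁ hf₁)
  set r : ℝ := 2 * q₀ + 1 with hr_def
  have hr : 0 ≤ r := by positivity
  have main : ∀ v, |gammaOp d (fun w => Real.sqrt (Maxwellian d w) * f₁ w)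
      (fun w => Real.sqrt (Maxwellian d w) * f₂ w) v| ≤
      ((A₁ + A₂) / 2) * Real.sqrt (Maxwellian d v) * (1 + ‖v‖) ^ r := by
    intro v
    have hs : 0 < Real.sqrt (Maxwellian d v) := Real.sqrt_pos.2 (maxwellian_pos v)
    have hinv : (Real.sqrt (Maxwellian d v))⁻¹ * Maxwellian d v = Real.sqrt (Maxwellian d v) := by
      rw [inv_mul_eq_div, eq_comm, eq_div_iff hs.ne']
      exact sqrt_maxwellian_sq v
    have h1 := hQ₁ v
    have h2 := hQ₂ v
    simp only [gammaOp]
    rw [abs_mul, abs_mul, abs_of_nonneg (by norm_num : (0:ℝ) ≤ 1/2),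
      abs_of_nonneg (inv_nonneg.2 hs.le)]
    calc 1 / 2 * (Real.sqrt (Maxwellian d v))⁻¹ * |_ + _|
        ≤ 1 / 2 * (Real.sqrt (Maxwellian d v))⁻¹ *
          ((A₁ + A₂) * Maxwellian d v * (1 + ‖v‖) ^ r) := by
          apply mul_le_mul_of_nonneg_left _ (by positivity)
          calc |_ + _| ≤ _ := abs_add_le _ _
            _ ≤ (A₁ + A₂) * Maxwellian d v * (1 + ‖v‖) ^ r := by
              rw [show (A₁ + A₂) * Maxwellian d v * (1 + ‖v‖) ^ r =
                A₁ * Maxwellian d v * (1 + ‖v‖) ^ r + A₂ * Maxwellian d v * (1 + ‖v‖) ^ r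
                from by ring]
              exact add_le_add h1 h2
      _ = ((A₁ + A₂) / 2) * ((Real.sqrt (Maxwellian d v))⁻¹ * Maxwellian d v) *
          (1 + ‖v‖) ^ r := by ring
      _ = ((A₁ + A₂) / 2) * Real.sqrt (Maxwellian d v) * (1 + ‖v‖) ^ r := by rw [hinv]
  refine ⟨⟨(A₁ + A₂) / 2, by positivity, r, hr, main⟩, fun k hk => ?_⟩
  refine ⟨(A₁ + A₂) / 2 * Real.sqrt ((2 * Real.pi) ^ (-(d:ℝ)/2)) * Real.exp ((k + r) ^ 2),
    fun v => ?_⟩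
  have hs : 0 < Real.sqrt (Maxwellian d v) := Real.sqrt_pos.2 (maxwellian_pos v)
  have hsqrt : Real.sqrt (Maxwellian d v) =
      Real.sqrt ((2 * Real.pi) ^ (-(d:ℝ)/2)) * Real.exp (-‖v‖ ^ 2 / 4) := by
    unfold Maxwellian
    rw [Real.sqrt_mul (by positivity), ← Real.exp_half]
    ring_nf
  have hpow : (1 + ‖v‖) ^ k * (1 + ‖v‖) ^ r = (1 + ‖v‖) ^ (k + r) :=
    (Real.rpow_add (by positivity) _ _).symm
  have hexp : (1 + ‖v‖) ^ (k + r) * Real.exp (-‖v‖ ^ 2 / 4) ≤ Real.exp ((k + r) ^ 2) := by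
    calc (1 + ‖v‖) ^ (k + r) * Real.exp (-‖v‖ ^ 2 / 4)
        ≤ Real.exp ((k + r) * ‖v‖) * Real.exp (-‖v‖ ^ 2 / 4) :=
          mul_le_mul_of_nonneg_right (one_add_rpow_le_exp (norm_nonneg v) (by linarith))
            (Real.exp_pos _).le
      _ = Real.exp ((k + r) * ‖v‖ + -‖v‖ ^ 2 / 4) := (Real.exp_add _ _).symm
      _ ≤ Real.exp ((k + r) ^ 2) :=
          Real.exp_le_exp.2 (by nlinarith [sq_nonneg ((k + r) - ‖v‖ / 2)])
  calc (1 + ‖v‖) ^ k * |gammaOp d (fun w => Real.sqrt (Maxwellian d w) * f₁ w)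
        (fun w => Real.sqrt (Maxwellian d w) * f₂ w) v|
      ≤ (1 + ‖v‖) ^ k * (((A₁ + A₂) / 2) * Real.sqrt (Maxwellian d v) * (1 + ‖v‖) ^ r) :=
        mul_le_mul_of_nonneg_left (main v) (by positivity)
    _ = ((A₁ + A₂) / 2) * Real.sqrt (Maxwellian d v) * ((1 + ‖v‖) ^ k * (1 + ‖v‖) ^ r) := by
        ring
    _ = ((A₁ + A₂) / 2) * Real.sqrt ((2 * Real.pi) ^ (-(d:ℝ)/2)) *
        ((1 + ‖v‖) ^ (k + r) * Real.exp (-‖v‖ ^ 2 / 4)) := by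
        rw [hpow, hsqrt]; ring
    _ ≤ (A₁ + A₂) / 2 * Real.sqrt ((2 * Real.pi) ^ (-(d:ℝ)/2)) * Real.exp ((k + r) ^ 2) := by
        apply mul_le_mul_of_nonneg_left hexp (by positivity)
end

section
/- There exists a constant C > 0 such that for every t ≥ 0, (1+t)^{1/4} ∫_0^t (t−s)^{−1/2} (1+(t−s))^{−1/2} (1+s)^{−1/2} ds ≤ C. -/
open MeasureTheory

section aux

lemma stmt8_ptwise {t s : ℝ} (hs0 : 0 < s) (hst : s < t) :
    (t - s) ^ (-(1 : ℝ) / 2) * (1 + (t - s)) ^ (-(1 : ℝ) / 2) * (1 + s) ^ (-(1 : ℝ) / 2)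
      ≤ (1 + t) ^ (-(1 : ℝ) / 4) * ((t - s) ^ (-(3 : ℝ) / 4) * (1 + s) ^ (-(1 : ℝ) / 4)) := by
  have hu : 0 < t - s := by linarith
  have h1u : 0 < 1 + (t - s) := by linarith
  have h1s : 0 < 1 + s := by linarith
  have h1t : 0 < 1 + t := by linarith
  have e1 : (1 + (t - s)) ^ (-(1 : ℝ) / 2)
      = (1 + (t - s)) ^ (-(1 : ℝ) / 4) * (1 + (t - s)) ^ (-(1 : ℝ) / 4) := by
    rw [← Real.rpow_add h1u]; norm_num
  have e2 : (1 + s) ^ (-(1 : ℝ) / 2)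
      = (1 + s) ^ (-(1 : ℝ) / 4) * (1 + s) ^ (-(1 : ℝ) / 4) := by
    rw [← Real.rpow_add h1s]; norm_num
  have e3 : (t - s) ^ (-(3 : ℝ) / 4) = (t - s) ^ (-(1 : ℝ) / 2) * (t - s) ^ (-(1 : ℝ) / 4) := by
    rw [← Real.rpow_add hu]; norm_num
  have hb1 : (1 + (t - s)) ^ (-(1 : ℝ) / 4) ≤ (t - s) ^ (-(1 : ℝ) / 4) :=
    Real.rpow_le_rpow_of_nonpos hu (by linarith) (by norm_num)
  have hb2 : (1 + (t - s)) ^ (-(1 : ℝ) / 4) * (1 + s) ^ (-(1 : ℝ) / 4)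
      ≤ (1 + t) ^ (-(1 : ℝ) / 4) := by
    rw [← Real.mul_rpow h1u.le h1s.le]
    exact Real.rpow_le_rpow_of_nonpos h1t (by nlinarith) (by norm_num)
  calc (t - s) ^ (-(1 : ℝ) / 2) * (1 + (t - s)) ^ (-(1 : ℝ) / 2) * (1 + s) ^ (-(1 : ℝ) / 2)
      = ((t - s) ^ (-(1 : ℝ) / 2) * (1 + s) ^ (-(1 : ℝ) / 4))
          * (1 + (t - s)) ^ (-(1 : ℝ) / 4)
          * ((1 + (t - s)) ^ (-(1 : ℝ) / 4) * (1 + s) ^ (-(1 : ℝ) / 4)) := by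
        rw [e1, e2]; ring
    _ ≤ ((t - s) ^ (-(1 : ℝ) / 2) * (1 + s) ^ (-(1 : ℝ) / 4))
          * (t - s) ^ (-(1 : ℝ) / 4) * (1 + t) ^ (-(1 : ℝ) / 4) := by
        apply mul_le_mul (mul_le_mul_of_nonneg_left hb1 (by positivity)) hb2 (by positivity)
          (by positivity)
    _ = (1 + t) ^ (-(1 : ℝ) / 4) * ((t - s) ^ (-(3 : ℝ) / 4) * (1 + s) ^ (-(1 : ℝ) / 4)) := by
        rw [e3]; ring

lemma stmt8_intB {t : ℝ} (ht : 0 < t) :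
    ∫ s in Set.Ioo (0 : ℝ) t, (t - s) ^ (-(3 : ℝ) / 4) * (1 + s) ^ (-(1 : ℝ) / 4) ≤ 16 / 3 := by
  have h34 : (-1 : ℝ) < -(3 : ℝ) / 4 := by norm_num
  have h14 : (-1 : ℝ) < -(1 : ℝ) / 4 := by norm_num
  have h1 : IntervalIntegrable (fun s => (t - s) ^ (-(3 : ℝ) / 4)) volume 0 t := by
    have := ((intervalIntegral.intervalIntegrable_rpow' h34 (a := 0) (b := t)).comp_sub_left t)
    simpa using this.symm
  have hcont : ContinuousOn (fun s : ℝ => (1 + s) ^ (-(1 : ℝ) / 4)) (Set.uIcc 0 t) := by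
    apply ContinuousOn.rpow_const (by fun_prop)
    intro x hx
    rw [Set.uIcc_of_le ht.le] at hx
    left; have := hx.1; positivity
  have hint : IntervalIntegrable
      (fun s => (t - s) ^ (-(3 : ℝ) / 4) * (1 + s) ^ (-(1 : ℝ) / 4)) volume 0 t :=
    h1.mul_continuousOn hcont
  have hsub1 : Set.uIcc 0 (t / 2) ⊆ Set.uIcc 0 t := by
    rw [Set.uIcc_of_le (by linarith : (0:ℝ) ≤ t/2), Set.uIcc_of_le ht.le]
    exact Set.Icc_subset_Icc le_rfl (by linarith)
  have hsub2 : Set.uIcc (t / 2) t ⊆ Set.uIcc 0 t := by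
    rw [Set.uIcc_of_le (by linarith : t/2 ≤ t), Set.uIcc_of_le ht.le]
    exact Set.Icc_subset_Icc (by linarith) le_rfl
  have hintA := hint.mono_set hsub1
  have hintB := hint.mono_set hsub2
  rw [← MeasureTheory.integral_Ioc_eq_integral_Ioo, ← intervalIntegral.integral_of_le ht.le,
    ← intervalIntegral.integral_add_adjacent_intervals hintA hintB]
  have ht2 : 0 < t / 2 := by linarith
  -- piece 1
  have p1 : (∫ s in (0:ℝ)..(t/2), (t - s) ^ (-(3 : ℝ) / 4) * (1 + s) ^ (-(1 : ℝ) / 4))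
      ≤ 4 / 3 := by
    have hg : IntervalIntegrable
        (fun s : ℝ => (t/2) ^ (-(3 : ℝ) / 4) * s ^ (-(1 : ℝ) / 4)) volume 0 (t/2) :=
      (intervalIntegral.intervalIntegrable_rpow' h14).const_mul _
    have step : (∫ s in (0:ℝ)..(t/2), (t - s) ^ (-(3 : ℝ) / 4) * (1 + s) ^ (-(1 : ℝ) / 4))
        ≤ ∫ s in (0:ℝ)..(t/2), (t/2) ^ (-(3 : ℝ) / 4) * s ^ (-(1 : ℝ) / 4) := by
      rw [intervalIntegral.integral_of_le ht2.le, intervalIntegral.integral_of_le ht2.le]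
      apply setIntegral_mono_on
        ((intervalIntegrable_iff_integrableOn_Ioc_of_le ht2.le).mp hintA)
        ((intervalIntegrable_iff_integrableOn_Ioc_of_le ht2.le).mp hg)
        measurableSet_Ioc
      intro s hs
      obtain ⟨hs0, hs2⟩ := hs
      have e1 : (t - s) ^ (-(3 : ℝ) / 4) ≤ (t/2) ^ (-(3 : ℝ) / 4) :=
        Real.rpow_le_rpow_of_nonpos ht2 (by linarith) (by norm_num)
      have e2 : (1 + s) ^ (-(1 : ℝ) / 4) ≤ s ^ (-(1 : ℝ) / 4) :=
        Real.rpow_le_rpow_of_nonpos hs0 (by linarith) (by norm_num)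
      exact mul_le_mul e1 e2 (by positivity) (by positivity)
    have comp : (∫ s in (0:ℝ)..(t/2), (t/2) ^ (-(3 : ℝ) / 4) * s ^ (-(1 : ℝ) / 4)) = 4/3 := by
      rw [intervalIntegral.integral_const_mul, integral_rpow (Or.inl h14)]
      rw [Real.zero_rpow (by norm_num)]
      rw [show (-(1:ℝ)/4 + 1) = 3/4 by norm_num]
      rw [show (t/2) ^ (-(3:ℝ)/4) * (((t/2) ^ ((3:ℝ)/4) - 0) / (3/4))
          = ((t/2) ^ (-(3:ℝ)/4) * (t/2) ^ ((3:ℝ)/4)) * (4/3) by ring]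
      rw [← Real.rpow_add ht2]
      norm_num
    linarith
  -- piece 2
  have p2 : (∫ s in (t/2)..t, (t - s) ^ (-(3 : ℝ) / 4) * (1 + s) ^ (-(1 : ℝ) / 4)) ≤ 4 := by
    have hg : IntervalIntegrable
        (fun s : ℝ => (t - s) ^ (-(3 : ℝ) / 4) * (t/2) ^ (-(1 : ℝ) / 4)) volume (t/2) t :=
      (h1.mono_set hsub2).mul_const _
    have step : (∫ s in (t/2)..t, (t - s) ^ (-(3 : ℝ) / 4) * (1 + s) ^ (-(1 : ℝ) / 4))
        ≤ ∫ s in (t/2)..t, (t - s) ^ (-(3 : ℝ) / 4) * (t/2) ^ (-(1 : ℝ) / 4) := by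
      rw [intervalIntegral.integral_of_le (by linarith : t/2 ≤ t),
        intervalIntegral.integral_of_le (by linarith : t/2 ≤ t)]
      apply setIntegral_mono_on
        ((intervalIntegrable_iff_integrableOn_Ioc_of_le (by linarith)).mp hintB)
        ((intervalIntegrable_iff_integrableOn_Ioc_of_le (by linarith)).mp hg)
        measurableSet_Ioc
      intro s hs
      obtain ⟨hs0, hs2⟩ := hs
      have hts : 0 ≤ t - s := by linarith
      have e2 : (1 + s) ^ (-(1 : ℝ) / 4) ≤ (t/2) ^ (-(1 : ℝ) / 4) :=
        Real.rpow_le_rpow_of_nonpos ht2 (by linarith) (by norm_num)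
      exact mul_le_mul_of_nonneg_left e2 (by positivity)
    have comp : (∫ s in (t/2)..t, (t - s) ^ (-(3 : ℝ) / 4) * (t/2) ^ (-(1 : ℝ) / 4)) = 4 := by
      rw [intervalIntegral.integral_mul_const]
      rw [intervalIntegral.integral_comp_sub_left (fun u : ℝ => u ^ (-(3:ℝ)/4)) t]
      rw [sub_self, show t - t/2 = t/2 by ring, integral_rpow (Or.inl h34)]
      rw [Real.zero_rpow (by norm_num)]
      rw [show (-(3:ℝ)/4 + 1) = 1/4 by norm_num]
      rw [show ((t/2) ^ ((1:ℝ)/4) - 0) / (1/4) * (t/2) ^ (-(1:ℝ)/4)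
          = ((t/2) ^ ((1:ℝ)/4) * (t/2) ^ (-(1:ℝ)/4)) * 4 by ring]
      rw [← Real.rpow_add ht2]
      norm_num
    linarith
  linarith

end aux

/-- Uniform-in-time convolution estimate:
`(1+t)^{1/4} ∫_0^t (t-s)^{-1/2} (1+(t-s))^{-1/2} (1+s)^{-1/2} ds ≤ C`. -/
theorem stmt_8 :
    ∃ C : ℝ, 0 < C ∧ ∀ t : ℝ, 0 ≤ t →
      (1 + t) ^ ((1 : ℝ) / 4) *
          ∫ s in Set.Ioo (0 : ℝ) t,
            (t - s) ^ (-(1 : ℝ) / 2) * (1 + (t - s)) ^ (-(1 : ℝ) / 2) *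
              (1 + s) ^ (-(1 : ℝ) / 2) ≤ C := by
  refine ⟨16 / 3, by norm_num, fun t ht => ?_⟩
  rcases eq_or_lt_of_le ht with h | ht
  · simp [← h]; norm_num
  have h1t : (0:ℝ) < 1 + t := by linarith
  have hG : IntegrableOn
      (fun s => (1 + t) ^ (-(1:ℝ)/4) * ((t - s) ^ (-(3 : ℝ) / 4) * (1 + s) ^ (-(1 : ℝ) / 4)))
      (Set.Ioo 0 t) volume := by
    have h34 : (-1 : ℝ) < -(3 : ℝ) / 4 := by norm_num
    have h1 : IntervalIntegrable (fun s => (t - s) ^ (-(3 : ℝ) / 4)) volume 0 t := by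
      have := ((intervalIntegral.intervalIntegrable_rpow' h34 (a := 0) (b := t)).comp_sub_left t)
      simpa using this.symm
    have hcont : ContinuousOn (fun s : ℝ => (1 + s) ^ (-(1 : ℝ) / 4)) (Set.uIcc 0 t) := by
      apply ContinuousOn.rpow_const (by fun_prop)
      intro x hx
      rw [Set.uIcc_of_le ht.le] at hx
      left; have := hx.1; positivity
    exact (intervalIntegrable_iff_integrableOn_Ioo_of_le ht.le).mp
      ((h1.mul_continuousOn hcont).const_mul _)
  have key : (∫ s in Set.Ioo (0 : ℝ) t,
        (t - s) ^ (-(1 : ℝ) / 2) * (1 + (t - s)) ^ (-(1 : ℝ) / 2) * (1 + s) ^ (-(1 : ℝ) / 2))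
      ≤ (1 + t) ^ (-(1:ℝ)/4) * (16/3) := by
    have step1 : (∫ s in Set.Ioo (0 : ℝ) t,
          (t - s) ^ (-(1 : ℝ) / 2) * (1 + (t - s)) ^ (-(1 : ℝ) / 2) * (1 + s) ^ (-(1 : ℝ) / 2))
        ≤ ∫ s in Set.Ioo (0 : ℝ) t,
            (1 + t) ^ (-(1:ℝ)/4) * ((t - s) ^ (-(3 : ℝ) / 4) * (1 + s) ^ (-(1 : ℝ) / 4)) := by
      apply integral_mono_of_nonneg ?_ hG ?_
      · filter_upwards [ae_restrict_mem measurableSet_Ioo] with s hs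
        have h1 : 0 < t - s := by linarith [hs.1, hs.2]
        have h2 : (0:ℝ) < 1 + (t - s) := by linarith
        have h3 : (0:ℝ) < 1 + s := by linarith [hs.1]
        positivity
      · filter_upwards [ae_restrict_mem measurableSet_Ioo] with s hs
        exact stmt8_ptwise hs.1 hs.2
    have step2 : (∫ s in Set.Ioo (0 : ℝ) t,
          (1 + t) ^ (-(1:ℝ)/4) * ((t - s) ^ (-(3 : ℝ) / 4) * (1 + s) ^ (-(1 : ℝ) / 4)))
        = (1 + t) ^ (-(1:ℝ)/4) *
          ∫ s in Set.Ioo (0 : ℝ) t, (t - s) ^ (-(3 : ℝ) / 4) * (1 + s) ^ (-(1 : ℝ) / 4) :=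
      integral_const_mul _ _
    calc _ ≤ _ := step1
      _ = _ := step2
      _ ≤ (1 + t) ^ (-(1:ℝ)/4) * (16/3) :=
        mul_le_mul_of_nonneg_left (stmt8_intB ht) (by positivity)
  calc (1 + t) ^ ((1 : ℝ) / 4) *
        ∫ s in Set.Ioo (0 : ℝ) t,
          (t - s) ^ (-(1 : ℝ) / 2) * (1 + (t - s)) ^ (-(1 : ℝ) / 2) * (1 + s) ^ (-(1 : ℝ) / 2)
      ≤ (1 + t) ^ ((1 : ℝ) / 4) * ((1 + t) ^ (-(1:ℝ)/4) * (16/3)) :=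
        mul_le_mul_of_nonneg_left key (by positivity)
    _ = ((1 + t) ^ ((1 : ℝ) / 4) * (1 + t) ^ (-(1:ℝ)/4)) * (16/3) := by ring
    _ = 16 / 3 := by rw [← Real.rpow_add h1t]; norm_num
end

section
/- There exists a constant C > 0 such that for every t ≥ 0, (1+t)^{1/4} ∫_0^t (t−s)^{−1/2} s^{−1/2} (1+s)^{−1/4} ds ≤ C. -/
open MeasureTheory

lemma aux_rpow_neg_half_four : (4:ℝ) ^ (-(1:ℝ)/2) = 1/2 := by
  have h4 : (4:ℝ) = 2 ^ (2:ℝ) := by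
    rw [show (2:ℝ) = ((2:ℕ):ℝ) by norm_num, Real.rpow_natCast]; norm_num
  rw [h4, ← Real.rpow_mul (by norm_num), show (2:ℝ) * (-(1:ℝ)/2) = -1 by ring,
    Real.rpow_neg_one]
  norm_num

lemma aux_two_rpow_quarter_le : (2:ℝ) ^ ((1:ℝ)/4) ≤ 2 := by
  nth_rewrite 2 [show (2:ℝ) = 2 ^ (1:ℝ) by rw [Real.rpow_one]]
  exact Real.rpow_le_rpow_of_exponent_le (by norm_num) (by norm_num)

lemma aux_key_integral_bound (t a b p : ℝ) (ht : 0 < t) (hp : -1 < p)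
    (hf : ∀ s ∈ Set.Ioo (0:ℝ) t,
      (t - s) ^ (-(1 : ℝ) / 2) * s ^ (-(1 : ℝ) / 2) * (1 + s) ^ (-(1 : ℝ) / 4)
        ≤ a * s ^ p + b * (t - s) ^ (-(1 : ℝ) / 2)) :
    (∫ s in Set.Ioo (0 : ℝ) t,
        (t - s) ^ (-(1 : ℝ) / 2) * s ^ (-(1 : ℝ) / 2) * (1 + s) ^ (-(1 : ℝ) / 4))
      ≤ a * (t ^ (p + 1) / (p + 1)) + b * (2 * t ^ ((1:ℝ)/2)) := by
  have hint1 : IntervalIntegrable (fun s : ℝ => s ^ p) volume 0 t :=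
    intervalIntegral.intervalIntegrable_rpow' hp
  have hint2 : IntervalIntegrable (fun s : ℝ => (t - s) ^ (-(1:ℝ)/2)) volume 0 t := by
    have := (intervalIntegral.intervalIntegrable_rpow' (a := 0) (b := t)
      (r := -(1:ℝ)/2) (by norm_num)).comp_sub_left t
    simpa using this.symm
  have hIoo1 : IntegrableOn (fun s : ℝ => s ^ p) (Set.Ioo 0 t) volume := by
    have := (intervalIntegrable_iff_integrableOn_Ioc_of_le ht.le).mp hint1
    exact this.mono_set Set.Ioo_subset_Ioc_self
  have hIoo2 : IntegrableOn (fun s : ℝ => (t - s) ^ (-(1:ℝ)/2)) (Set.Ioo 0 t) volume := by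
    have := (intervalIntegrable_iff_integrableOn_Ioc_of_le ht.le).mp hint2
    exact this.mono_set Set.Ioo_subset_Ioc_self
  have hg : IntegrableOn (fun s : ℝ => a * s ^ p + b * (t - s) ^ (-(1:ℝ)/2)) (Set.Ioo 0 t) volume :=
    (hIoo1.const_mul a).add (hIoo2.const_mul b)
  have hmono : (∫ s in Set.Ioo (0 : ℝ) t,
        (t - s) ^ (-(1 : ℝ) / 2) * s ^ (-(1 : ℝ) / 2) * (1 + s) ^ (-(1 : ℝ) / 4))
      ≤ ∫ s in Set.Ioo (0 : ℝ) t, (a * s ^ p + b * (t - s) ^ (-(1:ℝ)/2)) := by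
    apply integral_mono_of_nonneg
    · filter_upwards [ae_restrict_mem measurableSet_Ioo] with s hs
      have h1 : 0 < t - s := by linarith [hs.2]
      have h2 : 0 < s := hs.1
      positivity
    · exact hg
    · filter_upwards [ae_restrict_mem measurableSet_Ioo] with s hs
      exact hf s hs
  refine hmono.trans ?_
  rw [integral_add (hIoo1.const_mul a) (hIoo2.const_mul b), integral_const_mul, integral_const_mul]
  have e1 : (∫ s in Set.Ioo (0:ℝ) t, s ^ p) = t ^ (p + 1) / (p + 1) := by
    rw [← integral_Ioc_eq_integral_Ioo, ← intervalIntegral.integral_of_le ht.le,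
      integral_rpow (Or.inl hp), Real.zero_rpow (by linarith)]
    ring
  have e2 : (∫ s in Set.Ioo (0:ℝ) t, (t - s) ^ (-(1:ℝ)/2)) = 2 * t ^ ((1:ℝ)/2) := by
    rw [← integral_Ioc_eq_integral_Ioo, ← intervalIntegral.integral_of_le ht.le]
    have := intervalIntegral.integral_comp_sub_left (a := 0) (b := t)
      (fun x : ℝ => x ^ (-(1:ℝ)/2)) t
    simp only [sub_zero, sub_self] at this
    rw [this, integral_rpow (Or.inl (by norm_num)), Real.zero_rpow (by norm_num)]
    ring_nf
  rw [e1, e2]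

/-- Uniform-in-time convolution estimate:
`(1+t)^{1/4} ∫_0^t (t-s)^{-1/2} s^{-1/2} (1+s)^{-1/4} ds ≤ C`. -/
theorem stmt_9 :
    ∃ C : ℝ, 0 < C ∧ ∀ t : ℝ, 0 ≤ t →
      (1 + t) ^ ((1 : ℝ) / 4) *
          ∫ s in Set.Ioo (0 : ℝ) t,
            (t - s) ^ (-(1 : ℝ) / 2) * s ^ (-(1 : ℝ) / 2) * (1 + s) ^ (-(1 : ℝ) / 4) ≤ C := by
  refine ⟨16, by norm_num, ?_⟩
  intro t ht0
  rcases eq_or_lt_of_le ht0 with h0 | ht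
  · simp [← h0]
  have hu : (0:ℝ) < 1 + t := by linarith
  set m : ℝ := (t/2) ^ (-(1:ℝ)/2) with hm_def
  have hm0 : 0 < m := Real.rpow_pos_of_pos (by linarith) _
  have hP0 : (0:ℝ) < (1+t) ^ ((1:ℝ)/4) := Real.rpow_pos_of_pos hu _
  rcases le_or_gt t 1 with h1 | h1
  · -- case 0 < t ≤ 1
    have hf : ∀ s ∈ Set.Ioo (0:ℝ) t,
        (t - s) ^ (-(1 : ℝ) / 2) * s ^ (-(1 : ℝ) / 2) * (1 + s) ^ (-(1 : ℝ) / 4)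
          ≤ m * s ^ (-(1:ℝ)/2) + m * (t - s) ^ (-(1:ℝ)/2) := by
      intro s hs
      have hs0 : (0:ℝ) < s := hs.1
      have hst : 0 < t - s := by linarith [hs.2]
      have hz : (1 + s) ^ (-(1:ℝ)/4) ≤ 1 :=
        Real.rpow_le_one_of_one_le_of_nonpos (by linarith) (by norm_num)
      rcases le_or_gt s (t/2) with h | h
      · have hx : (t - s) ^ (-(1:ℝ)/2) ≤ m :=
          Real.rpow_le_rpow_of_nonpos (by linarith) (by linarith) (by norm_num)
        calc (t - s) ^ (-(1 : ℝ) / 2) * s ^ (-(1 : ℝ) / 2) * (1 + s) ^ (-(1 : ℝ) / 4)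
            ≤ m * s ^ (-(1:ℝ)/2) * 1 := by
              apply mul_le_mul (mul_le_mul hx le_rfl (by positivity) hm0.le) hz
                (by positivity) (by positivity)
          _ ≤ m * s ^ (-(1:ℝ)/2) + m * (t - s) ^ (-(1:ℝ)/2) := by
              rw [mul_one]; have : 0 ≤ m * (t - s) ^ (-(1:ℝ)/2) := by positivity
              linarith
      · have hy : s ^ (-(1:ℝ)/2) ≤ m :=
          Real.rpow_le_rpow_of_nonpos (by linarith) h.le (by norm_num)
        calc (t - s) ^ (-(1 : ℝ) / 2) * s ^ (-(1 : ℝ) / 2) * (1 + s) ^ (-(1 : ℝ) / 4)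
            ≤ (t - s) ^ (-(1:ℝ)/2) * m * 1 := by
              apply mul_le_mul (mul_le_mul le_rfl hy (by positivity) (by positivity)) hz
                (by positivity) (by positivity)
          _ ≤ m * s ^ (-(1:ℝ)/2) + m * (t - s) ^ (-(1:ℝ)/2) := by
              rw [mul_one]; have : 0 ≤ m * s ^ (-(1:ℝ)/2) := by positivity
              linarith [mul_comm m ((t - s) ^ (-(1:ℝ)/2))]
    have key := aux_key_integral_bound t m m (-(1:ℝ)/2) ht (by norm_num) hf
    have hmt : m * t ^ ((1:ℝ)/2) ≤ 2 := by
      have e : m = 2 ^ ((1:ℝ)/2) * t ^ (-(1:ℝ)/2) := by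
        rw [hm_def, Real.div_rpow ht.le (by norm_num),
          show (-(1:ℝ)/2) = -((1:ℝ)/2) by ring,
          Real.rpow_neg (by norm_num : (0:ℝ) ≤ 2), div_eq_mul_inv, inv_inv, mul_comm]
      rw [e, mul_assoc, ← Real.rpow_add ht]
      norm_num
      calc (2:ℝ) ^ ((1:ℝ)/2) ≤ 2 ^ (1:ℝ) :=
            Real.rpow_le_rpow_of_exponent_le (by norm_num) (by norm_num)
        _ = 2 := Real.rpow_one 2
    have hX : (∫ s in Set.Ioo (0 : ℝ) t,
        (t - s) ^ (-(1 : ℝ) / 2) * s ^ (-(1 : ℝ) / 2) * (1 + s) ^ (-(1 : ℝ) / 4)) ≤ 8 := by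
      refine key.trans ?_
      have : m * (t ^ (-(1:ℝ)/2 + 1) / (-(1:ℝ)/2 + 1)) + m * (2 * t ^ ((1:ℝ)/2))
          = 4 * (m * t ^ ((1:ℝ)/2)) := by
        norm_num; ring
      rw [this]; linarith
    have hP2 : (1+t) ^ ((1:ℝ)/4) ≤ 2 := by
      calc (1+t) ^ ((1:ℝ)/4) ≤ 2 ^ ((1:ℝ)/4) :=
            Real.rpow_le_rpow (by linarith) (by linarith) (by norm_num)
        _ ≤ 2 := aux_two_rpow_quarter_le
    have hInt0 : 0 ≤ (∫ s in Set.Ioo (0 : ℝ) t,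
        (t - s) ^ (-(1 : ℝ) / 2) * s ^ (-(1 : ℝ) / 2) * (1 + s) ^ (-(1 : ℝ) / 4)) := by
      apply integral_nonneg_of_ae
      filter_upwards [ae_restrict_mem measurableSet_Ioo] with s hs
      have h1 : 0 < t - s := by linarith [hs.2]
      have h2 : 0 < s := hs.1
      positivity
    calc (1 + t) ^ ((1:ℝ)/4) * _ ≤ 2 * 8 := mul_le_mul hP2 hX hInt0 (by norm_num)
      _ = 16 := by norm_num
  · -- case t > 1
    set Q : ℝ := (1+t) ^ (-(1:ℝ)/4) with hQ_def
    set R : ℝ := (1+t) ^ (-(1:ℝ)/2) with hR_def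
    have hQ0 : 0 < Q := Real.rpow_pos_of_pos hu _
    have hR0 : 0 < R := Real.rpow_pos_of_pos hu _
    set w : ℝ := (1 + t/2) ^ (-(1:ℝ)/4) with hw_def
    have hw0 : 0 < w := Real.rpow_pos_of_pos (by linarith) _
    have hf : ∀ s ∈ Set.Ioo (0:ℝ) t,
        (t - s) ^ (-(1 : ℝ) / 2) * s ^ (-(1 : ℝ) / 2) * (1 + s) ^ (-(1 : ℝ) / 4)
          ≤ m * s ^ (-(3:ℝ)/4) + (m * w) * (t - s) ^ (-(1:ℝ)/2) := by
      intro s hs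
      have hs0 : (0:ℝ) < s := hs.1
      have hst : 0 < t - s := by linarith [hs.2]
      rcases le_or_gt s (t/2) with h | h
      · have hx : (t - s) ^ (-(1:ℝ)/2) ≤ m :=
          Real.rpow_le_rpow_of_nonpos (by linarith) (by linarith) (by norm_num)
        have hz : (1 + s) ^ (-(1:ℝ)/4) ≤ s ^ (-(1:ℝ)/4) :=
          Real.rpow_le_rpow_of_nonpos hs0 (by linarith) (by norm_num)
        calc (t - s) ^ (-(1 : ℝ) / 2) * s ^ (-(1 : ℝ) / 2) * (1 + s) ^ (-(1 : ℝ) / 4)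
            ≤ m * s ^ (-(1:ℝ)/2) * s ^ (-(1:ℝ)/4) := by
              apply mul_le_mul (mul_le_mul hx le_rfl (by positivity) hm0.le) hz
                (by positivity) (by positivity)
          _ = m * s ^ (-(3:ℝ)/4) := by
              rw [mul_assoc, ← Real.rpow_add hs0]; norm_num
          _ ≤ m * s ^ (-(3:ℝ)/4) + (m * w) * (t - s) ^ (-(1:ℝ)/2) := by
              have : 0 ≤ (m * w) * (t - s) ^ (-(1:ℝ)/2) := by positivity
              linarith
      · have hy : s ^ (-(1:ℝ)/2) ≤ m :=
          Real.rpow_le_rpow_of_nonpos (by linarith) h.le (by norm_num)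
        have hz : (1 + s) ^ (-(1:ℝ)/4) ≤ w :=
          Real.rpow_le_rpow_of_nonpos (by linarith) (by linarith) (by norm_num)
        calc (t - s) ^ (-(1 : ℝ) / 2) * s ^ (-(1 : ℝ) / 2) * (1 + s) ^ (-(1 : ℝ) / 4)
            ≤ (t - s) ^ (-(1:ℝ)/2) * m * w := by
              apply mul_le_mul (mul_le_mul le_rfl hy (by positivity) (by positivity)) hz
                (by positivity) (by positivity)
          _ = (m * w) * (t - s) ^ (-(1:ℝ)/2) := by ring
          _ ≤ m * s ^ (-(3:ℝ)/4) + (m * w) * (t - s) ^ (-(1:ℝ)/2) := by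
              have : 0 ≤ m * s ^ (-(3:ℝ)/4) := by positivity
              linarith
    have key := aux_key_integral_bound t m (m * w) (-(3:ℝ)/4) ht (by norm_num) hf
    -- basic comparisons
    have hmR : m ≤ 2 * R := by
      have h2 : (1+t)/4 ≤ t/2 := by linarith
      calc m ≤ ((1+t)/4) ^ (-(1:ℝ)/2) :=
            Real.rpow_le_rpow_of_nonpos (by linarith) h2 (by norm_num)
        _ = (1+t) ^ (-(1:ℝ)/2) / 4 ^ (-(1:ℝ)/2) := Real.div_rpow hu.le (by norm_num) _
        _ = 2 * R := by rw [aux_rpow_neg_half_four]; rw [hR_def]; ring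
    have hwQ : w ≤ 2 * Q := by
      have h2 : (1+t)/2 ≤ 1 + t/2 := by linarith
      calc w ≤ ((1+t)/2) ^ (-(1:ℝ)/4) :=
            Real.rpow_le_rpow_of_nonpos (by linarith) h2 (by norm_num)
        _ = (1+t) ^ (-(1:ℝ)/4) / 2 ^ (-(1:ℝ)/4) := Real.div_rpow hu.le (by norm_num) _
        _ = (1+t) ^ (-(1:ℝ)/4) * 2 ^ ((1:ℝ)/4) := by
            rw [show (-(1:ℝ)/4) = -((1:ℝ)/4) by ring, Real.rpow_neg (by norm_num : (0:ℝ) ≤ 2),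
              div_eq_mul_inv, inv_inv]
        _ ≤ Q * 2 := by
            rw [hQ_def]
            exact mul_le_mul_of_nonneg_left aux_two_rpow_quarter_le hQ0.le
        _ = 2 * Q := by ring
    have htP : t ^ ((1:ℝ)/4) ≤ (1+t) ^ ((1:ℝ)/4) :=
      Real.rpow_le_rpow ht.le (by linarith) (by norm_num)
    have htS : t ^ ((1:ℝ)/2) ≤ (1+t) ^ ((1:ℝ)/2) :=
      Real.rpow_le_rpow ht.le (by linarith) (by norm_num)
    have hRP : R * (1+t) ^ ((1:ℝ)/4) = Q := by
      rw [hR_def, hQ_def, ← Real.rpow_add hu]; norm_num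
    have hRS : R * (1+t) ^ ((1:ℝ)/2) = 1 := by
      rw [hR_def, ← Real.rpow_add hu]; norm_num
    have hPQ : (1+t) ^ ((1:ℝ)/4) * Q = 1 := by
      rw [hQ_def, ← Real.rpow_add hu]; norm_num
    have h1' : m * t ^ ((1:ℝ)/4) ≤ 2 * Q := by
      calc m * t ^ ((1:ℝ)/4) ≤ (2 * R) * (1+t) ^ ((1:ℝ)/4) :=
            mul_le_mul hmR htP (by positivity) (by positivity)
        _ = 2 * (R * (1+t) ^ ((1:ℝ)/4)) := by ring
        _ = 2 * Q := by rw [hRP]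
    have h2' : (m * w) * t ^ ((1:ℝ)/2) ≤ 4 * Q := by
      calc (m * w) * t ^ ((1:ℝ)/2) ≤ ((2*R) * (2*Q)) * (1+t) ^ ((1:ℝ)/2) := by
            apply mul_le_mul (mul_le_mul hmR hwQ hw0.le (by positivity)) htS
              (by positivity) (by positivity)
        _ = 4 * Q * (R * (1+t) ^ ((1:ℝ)/2)) := by ring
        _ = 4 * Q := by rw [hRS]; ring
    have hX : (∫ s in Set.Ioo (0 : ℝ) t,
        (t - s) ^ (-(1 : ℝ) / 2) * s ^ (-(1 : ℝ) / 2) * (1 + s) ^ (-(1 : ℝ) / 4)) ≤ 16 * Q := by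
      refine key.trans ?_
      have e : m * (t ^ (-(3:ℝ)/4 + 1) / (-(3:ℝ)/4 + 1)) + (m * w) * (2 * t ^ ((1:ℝ)/2))
          = 4 * (m * t ^ ((1:ℝ)/4)) + 2 * ((m * w) * t ^ ((1:ℝ)/2)) := by
        norm_num; ring
      rw [e]; linarith
    calc (1 + t) ^ ((1:ℝ)/4) * _ ≤ (1 + t) ^ ((1:ℝ)/4) * (16 * Q) :=
          mul_le_mul_of_nonneg_left hX hP0.le
      _ = 16 * ((1+t) ^ ((1:ℝ)/4) * Q) := by ring
      _ = 16 := by rw [hPQ]; ring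
end

section
/- For every α > 0 there exists a constant C > 0 such that for every ε ∈ (0,1] and every t ≥ 0, (1+t)^{1/4} ∫_0^t (t−s)^{−1/2} (1+(t−s))^{−1/2} e^{−α s/ε²} ds ≤ C ε^{2/3}. -/
open MeasureTheory

section auxST

lemma aux_zpexp {z p : ℝ} (hz : 0 ≤ z) (hp0 : 0 ≤ p) (hp1 : p ≤ 1) :
    z ^ p * Real.exp (-z) ≤ 1 := by
  rcases le_total z 1 with h | h
  · have h1 : z ^ p ≤ 1 := Real.rpow_le_one hz h hp0
    have h2 : Real.exp (-z) ≤ 1 := Real.exp_le_one_iff.mpr (by linarith)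
    calc z ^ p * Real.exp (-z) ≤ 1 * 1 :=
          mul_le_mul h1 h2 (Real.exp_pos _).le zero_le_one
    _ = 1 := by ring
  · have h1 : z ^ p ≤ z := by
      calc z ^ p ≤ z ^ (1:ℝ) := Real.rpow_le_rpow_of_exponent_le h hp1
      _ = z := Real.rpow_one z
    have h2 : z ≤ Real.exp z := by linarith [Real.add_one_le_exp z]
    calc z ^ p * Real.exp (-z) ≤ Real.exp z * Real.exp (-z) :=
          mul_le_mul_of_nonneg_right (h1.trans h2) (Real.exp_pos _).le
    _ = 1 := by rw [← Real.exp_add]; simp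

lemma aux_rpexp {c x p : ℝ} (hc : 0 < c) (hx : 0 ≤ x) (hp0 : 0 ≤ p) (hp1 : p ≤ 1) :
    x ^ p * Real.exp (-(c * x)) ≤ (1/c) ^ p := by
  have hx' : x = (1/c) * (c*x) := by field_simp
  calc x ^ p * Real.exp (-(c*x)) = ((1/c) * (c*x)) ^ p * Real.exp (-(c*x)) := by rw [← hx']
  _ = (1/c)^p * ((c*x)^p * Real.exp (-(c*x))) := by
        rw [Real.mul_rpow (by positivity) (by positivity)]; ring
  _ ≤ (1/c)^p * 1 :=
        mul_le_mul_of_nonneg_left (aux_zpexp (by positivity) hp0 hp1) (by positivity)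
  _ = (1/c)^p := mul_one _

lemma rpow_pow_eq (x : ℝ) (hx : 0 ≤ x) (p : ℝ) (n : ℕ) : (x ^ p) ^ n = x ^ (p * n) := by
  rw [← Real.rpow_natCast (x ^ p) n, ← Real.rpow_mul hx]

lemma aux_negtwo {x : ℝ} (hx : 0 < x) : (x ^ (-(1:ℝ)/2))^(4:ℕ) = (x^2)⁻¹ := by
  rw [rpow_pow_eq x hx.le (-(1:ℝ)/2) 4]
  norm_num

lemma aux_one4 {x : ℝ} (hx : 0 ≤ x) : (x ^ ((1:ℝ)/4))^(4:ℕ) = x := by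
  rw [rpow_pow_eq x hx ((1:ℝ)/4) 4]
  norm_num

lemma aux_hKey {t : ℝ} (ht0 : 0 < t) :
    (1+t) ^ ((1:ℝ)/4) * ((t/2) ^ (-(1:ℝ)/2) * (1+t/2) ^ (-(1:ℝ)/2)) ≤ 2 * t ^ (-(1:ℝ)/2) := by
  have npos : (0:ℝ) < t ^ (-(1:ℝ)/2) := Real.rpow_pos_of_pos ht0 _
  apply le_of_pow_le_pow_left₀ (n := 4) (by norm_num) (by positivity)
  rw [mul_pow, mul_pow, mul_pow]
  rw [aux_one4 (by linarith), aux_negtwo (by linarith), aux_negtwo (by linarith),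
    aux_negtwo ht0]
  have h2 : (0:ℝ) < t/2 := by linarith
  have h3 : (0:ℝ) < 1 + t/2 := by linarith
  field_simp
  nlinarith [sq_nonneg t, mul_pos ht0 ht0, mul_nonneg (mul_nonneg (sq_nonneg t) ht0.le) ht0.le]

variable (α ε t : ℝ)

/-- the integrand -/
noncomputable def gfunST (s : ℝ) : ℝ :=
  (t - s) ^ (-(1 : ℝ) / 2) * (1 + (t - s)) ^ (-(1 : ℝ) / 2) * Real.exp (-α * s / ε ^ 2)

variable {α ε t}

lemma hInthST (a b : ℝ) : IntervalIntegrable (fun s => (t - s) ^ (-(1:ℝ)/2)) volume a b := by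
  have := (intervalIntegral.intervalIntegrable_rpow' (a := t - a) (b := t - b)
    (r := -(1:ℝ)/2) (by norm_num)).comp_sub_left t
  simpa using this

lemma hHST {a : ℝ} : ∫ s in a..t, (t - s) ^ (-(1:ℝ)/2) = 2 * (t - a) ^ ((1:ℝ)/2) := by
  rw [intervalIntegral.integral_comp_sub_left (fun u => u ^ (-(1:ℝ)/2)) t, sub_self]
  rw [integral_rpow (Or.inl (by norm_num))]
  norm_num
  ring

lemma gfunST_le (hα : 0 < α) (hε0 : 0 < ε) {s : ℝ} (hs0 : 0 ≤ s) (hst : s ≤ t) :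
    gfunST α ε t s ≤ (t - s) ^ (-(1:ℝ)/2) := by
  have h1 : 0 ≤ t - s := by linarith
  have hA : 0 ≤ (t - s) ^ (-(1:ℝ)/2) := Real.rpow_nonneg h1 _
  have hB0 : 0 ≤ (1 + (t - s)) ^ (-(1:ℝ)/2) := Real.rpow_nonneg (by linarith) _
  have hB : (1 + (t - s)) ^ (-(1:ℝ)/2) ≤ 1 :=
    Real.rpow_le_one_of_one_le_of_nonpos (by linarith) (by norm_num)
  have hE : Real.exp (-α * s / ε ^ 2) ≤ 1 := by
    apply Real.exp_le_one_iff.mpr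
    have h2 : 0 ≤ α * s / ε ^ 2 := by positivity
    have heq : -α * s / ε ^ 2 = -(α * s / ε ^ 2) := by ring
    rw [heq]; linarith
  unfold gfunST
  calc (t - s) ^ (-(1:ℝ)/2) * (1 + (t - s)) ^ (-(1:ℝ)/2) * Real.exp (-α * s / ε ^ 2)
      ≤ (t - s) ^ (-(1:ℝ)/2) * (1 + (t - s)) ^ (-(1:ℝ)/2) * 1 :=
        mul_le_mul_of_nonneg_left hE (mul_nonneg hA hB0)
  _ = (t - s) ^ (-(1:ℝ)/2) * (1 + (t - s)) ^ (-(1:ℝ)/2) := mul_one _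
  _ ≤ (t - s) ^ (-(1:ℝ)/2) * 1 := mul_le_mul_of_nonneg_left hB hA
  _ = (t - s) ^ (-(1:ℝ)/2) := mul_one _

lemma gfunST_nonneg {s : ℝ} (hst : s ≤ t) : 0 ≤ gfunST α ε t s := by
  unfold gfunST
  have h1 : 0 ≤ t - s := by linarith
  exact mul_nonneg (mul_nonneg (Real.rpow_nonneg h1 _) (Real.rpow_nonneg (by linarith) _))
    (Real.exp_pos _).le

lemma hIntgST (hα : 0 < α) (hε0 : 0 < ε) (ht : 0 ≤ t) :
    IntervalIntegrable (gfunST α ε t) volume 0 t := by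
  apply (hInthST (t := t) 0 t).mono_fun
  · exact (by unfold gfunST; fun_prop : Measurable (gfunST α ε t)).aestronglyMeasurable
  · rw [Set.uIoc_of_le ht]
    filter_upwards [ae_restrict_mem measurableSet_Ioc] with s hs
    have h1 : 0 ≤ t - s := by linarith [hs.2]
    rw [Real.norm_eq_abs, Real.norm_eq_abs, abs_of_nonneg (gfunST_nonneg hs.2),
      abs_of_nonneg (Real.rpow_nonneg h1 _)]
    exact gfunST_le hα hε0 hs.1.le hs.2

lemma hExpInt (hα : 0 < α) (hε0 : 0 < ε) {T : ℝ} :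
    ∫ s in (0:ℝ)..T, Real.exp (-α * s / ε ^ 2) ≤ ε^2/α := by
  have hb : (0:ℝ) < α / ε^2 := by positivity
  have hc : (-(α/ε^2)) ≠ 0 := neg_ne_zero.mpr hb.ne'
  have heq : (fun s : ℝ => Real.exp (-α * s / ε ^ 2)) = fun s => Real.exp (-(α/ε^2) * s) := by
    funext s; ring_nf
  rw [heq, intervalIntegral.integral_comp_mul_left (fun x => Real.exp x) hc,
    integral_exp]
  simp only [smul_eq_mul, mul_zero, Real.exp_zero]
  have hE := (Real.exp_pos (-(α/ε^2) * T)).le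
  rw [inv_neg]
  have h2 : ε^2/α = (α/ε^2)⁻¹ := by field_simp
  rw [h2]
  have hbi : 0 < (α/ε^2)⁻¹ := by positivity
  nlinarith [mul_nonneg hbi.le hE]

end auxST

set_option maxHeartbeats 2000000 in
/-- Convolution estimate with the fast exponential decay `e^{-α s/ε²}`:
`(1+t)^{1/4} ∫_0^t (t-s)^{-1/2} (1+(t-s))^{-1/2} e^{-α s/ε²} ds ≤ C ε^{2/3}`. -/
theorem stmt_10 (α : ℝ) (hα : 0 < α) :
    ∃ C : ℝ, 0 < C ∧ ∀ ε : ℝ, ε ∈ Set.Ioc (0 : ℝ) 1 → ∀ t : ℝ, 0 ≤ t →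
      (1 + t) ^ ((1 : ℝ) / 4) *
          ∫ s in Set.Ioo (0 : ℝ) t,
            (t - s) ^ (-(1 : ℝ) / 2) * (1 + (t - s)) ^ (-(1 : ℝ) / 2) *
              Real.exp (-α * s / ε ^ 2) ≤ C * ε ^ ((2 : ℝ) / 3) := by
  refine ⟨4 + 2/α + 4*(2/α) ^ ((1:ℝ)/2) + 4*(2/α) ^ ((3:ℝ)/4), by positivity, ?_⟩
  rintro ε ⟨hε0, hε1⟩ t ht
  have hε2 : (0:ℝ) < ε^2 := by positivity
  have hX : (0:ℝ) ≤ (2/α) ^ ((1:ℝ)/2) := Real.rpow_nonneg (by positivity) _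
  have hY : (0:ℝ) ≤ (2/α) ^ ((3:ℝ)/4) := Real.rpow_nonneg (by positivity) _
  have he23 : (0:ℝ) < ε ^ ((2:ℝ)/3) := Real.rpow_pos_of_pos hε0 _
  have hεsq : (ε^2 : ℝ) ^ ((1:ℝ)/2) = ε := by
    rw [← Real.rpow_natCast ε 2, ← Real.rpow_mul hε0.le]; norm_num
  have hεsq34 : (ε^2 : ℝ) ^ ((3:ℝ)/4) = ε ^ ((3:ℝ)/2) := by
    rw [← Real.rpow_natCast ε 2, ← Real.rpow_mul hε0.le]; norm_num
  have heps1 : ε ≤ ε ^ ((2:ℝ)/3) := by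
    calc ε = ε ^ (1:ℝ) := (Real.rpow_one ε).symm
    _ ≤ ε ^ ((2:ℝ)/3) := Real.rpow_le_rpow_of_exponent_ge hε0 hε1 (by norm_num)
  have heps32 : ε ^ ((3:ℝ)/2) ≤ ε ^ ((2:ℝ)/3) :=
    Real.rpow_le_rpow_of_exponent_ge hε0 hε1 (by norm_num)
  show (1 + t) ^ ((1:ℝ)/4) * (∫ s in Set.Ioo (0:ℝ) t, gfunST α ε t s) ≤ _
  rw [show (∫ s in Set.Ioo (0:ℝ) t, gfunST α ε t s) = ∫ s in (0:ℝ)..t, gfunST α ε t s from by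
    rw [intervalIntegral.integral_of_le ht, MeasureTheory.integral_Ioc_eq_integral_Ioo]]
  have hIg := hIntgST hα hε0 ht
  rcases le_total t (ε ^ ((4:ℝ)/3)) with hcase | hcase
  · -- small t
    have ht1 : t ≤ 1 := le_trans hcase (Real.rpow_le_one hε0.le hε1 (by norm_num))
    have hI1 : ∫ s in (0:ℝ)..t, gfunST α ε t s ≤ 2 * t ^ ((1:ℝ)/2) := by
      have h := intervalIntegral.integral_mono_on ht hIg (hInthST (t := t) 0 t)
        (fun s hs => gfunST_le hα hε0 hs.1 hs.2)
      rw [hHST] at h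
      simpa using h
    have hpre : (1+t) ^ ((1:ℝ)/4) ≤ 2 := by
      calc (1+t) ^ ((1:ℝ)/4) ≤ 2 ^ ((1:ℝ)/4) :=
            Real.rpow_le_rpow (by linarith) (by linarith) (by norm_num)
      _ ≤ 2 ^ (1:ℝ) := Real.rpow_le_rpow_of_exponent_le one_le_two (by norm_num)
      _ = 2 := Real.rpow_one 2
    have ht12 : t ^ ((1:ℝ)/2) ≤ ε ^ ((2:ℝ)/3) := by
      calc t ^ ((1:ℝ)/2) ≤ (ε ^ ((4:ℝ)/3)) ^ ((1:ℝ)/2) :=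
            Real.rpow_le_rpow ht hcase (by norm_num)
      _ = ε ^ ((2:ℝ)/3) := by rw [← Real.rpow_mul hε0.le]; norm_num
    have hInn : 0 ≤ ∫ s in (0:ℝ)..t, gfunST α ε t s :=
      intervalIntegral.integral_nonneg ht (fun s hs => gfunST_nonneg hs.2)
    have h4 : (1+t) ^ ((1:ℝ)/4) * (∫ s in (0:ℝ)..t, gfunST α ε t s) ≤ 2 * (2 * ε ^ ((2:ℝ)/3)) := by
      apply mul_le_mul hpre (hI1.trans (by nlinarith)) hInn (by norm_num)
    nlinarith [mul_nonneg hX he23.le, mul_nonneg hY he23.le,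
      mul_nonneg (show (0:ℝ) ≤ 2/α by positivity) he23.le]
  · -- large t
    have ht0 : 0 < t := lt_of_lt_of_le (Real.rpow_pos_of_pos hε0 _) hcase
    have hsub1 : Set.uIcc (0:ℝ) (t/2) ⊆ Set.uIcc 0 t := by
      rw [Set.uIcc_of_le (by linarith : (0:ℝ) ≤ t/2), Set.uIcc_of_le ht]
      exact Set.Icc_subset_Icc le_rfl (by linarith)
    have hsub2 : Set.uIcc (t/2) t ⊆ Set.uIcc 0 t := by
      rw [Set.uIcc_of_le (by linarith : t/2 ≤ t), Set.uIcc_of_le ht]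
      exact Set.Icc_subset_Icc (by linarith) le_rfl
    have hIg1 := hIg.mono_set hsub1
    have hIg2 := hIg.mono_set hsub2
    have hsplit := intervalIntegral.integral_add_adjacent_intervals hIg1 hIg2
    set K : ℝ := (t/2) ^ (-(1:ℝ)/2) * (1+t/2) ^ (-(1:ℝ)/2) with hKdef
    have hKnn : 0 ≤ K := mul_nonneg (Real.rpow_nonneg (by linarith) _)
      (Real.rpow_nonneg (by linarith) _)
    -- piece A
    have hIA : ∫ s in (0:ℝ)..(t/2), gfunST α ε t s ≤ K * (ε^2/α) := by
      have hpt : ∀ s ∈ Set.Icc (0:ℝ) (t/2),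
          gfunST α ε t s ≤ K * Real.exp (-α * s / ε^2) := by
        intro s hs
        have h2 : t/2 ≤ t - s := by linarith [hs.2]
        have hA' : (t-s) ^ (-(1:ℝ)/2) ≤ (t/2) ^ (-(1:ℝ)/2) :=
          Real.rpow_le_rpow_of_nonpos (by linarith) h2 (by norm_num)
        have hB' : (1+(t-s)) ^ (-(1:ℝ)/2) ≤ (1+t/2) ^ (-(1:ℝ)/2) :=
          Real.rpow_le_rpow_of_nonpos (by linarith) (by linarith) (by norm_num)
        have hBnn : 0 ≤ (1+(t-s)) ^ (-(1:ℝ)/2) := Real.rpow_nonneg (by linarith) _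
        have hKnn' : 0 ≤ (t/2) ^ (-(1:ℝ)/2) := Real.rpow_nonneg (by linarith) _
        exact mul_le_mul_of_nonneg_right (mul_le_mul hA' hB' hBnn hKnn') (Real.exp_pos _).le
      have hcont : IntervalIntegrable (fun s => K * Real.exp (-α * s / ε^2)) volume 0 (t/2) :=
        Continuous.intervalIntegrable (by fun_prop) _ _
      calc ∫ s in (0:ℝ)..(t/2), gfunST α ε t s
          ≤ ∫ s in (0:ℝ)..(t/2), K * Real.exp (-α * s / ε^2) :=
            intervalIntegral.integral_mono_on (by linarith) hIg1 hcont hpt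
      _ = K * ∫ s in (0:ℝ)..(t/2), Real.exp (-α * s / ε^2) := by
            rw [intervalIntegral.integral_const_mul]
      _ ≤ K * (ε^2/α) := mul_le_mul_of_nonneg_left (hExpInt hα hε0) hKnn
    -- piece B
    set e0 : ℝ := Real.exp (-α * (t/2) / ε^2) with he0def
    have hIB : ∫ s in (t/2)..t, gfunST α ε t s ≤ 2 * (t/2) ^ ((1:ℝ)/2) * e0 := by
      have hpt : ∀ s ∈ Set.Icc (t/2) t,
          gfunST α ε t s ≤ (t - s) ^ (-(1:ℝ)/2) * e0 := by
        intro s hs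
        have h1 : 0 ≤ t - s := by linarith [hs.2]
        have hA : 0 ≤ (t-s) ^ (-(1:ℝ)/2) := Real.rpow_nonneg h1 _
        have hB0 : 0 ≤ (1+(t-s)) ^ (-(1:ℝ)/2) := Real.rpow_nonneg (by linarith) _
        have hB : (1+(t-s)) ^ (-(1:ℝ)/2) ≤ 1 :=
          Real.rpow_le_one_of_one_le_of_nonpos (by linarith) (by norm_num)
        have hE : Real.exp (-α * s / ε^2) ≤ e0 := by
          apply Real.exp_le_exp.mpr
          have hs1 : t/2 ≤ s := hs.1
          have h5 : α * (t/2) ≤ α * s := by nlinarith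
          have h6 : α * (t/2) / ε^2 ≤ α * s / ε^2 := by gcongr
          have e1 : -α * s / ε^2 = -(α * s / ε^2) := by ring
          have e2 : -α * (t/2) / ε^2 = -(α * (t/2) / ε^2) := by ring
          rw [e1, e2]
          exact neg_le_neg h6
        calc gfunST α ε t s
            = (t-s) ^ (-(1:ℝ)/2) * ((1+(t-s)) ^ (-(1:ℝ)/2) * Real.exp (-α * s / ε^2)) := by
              unfold gfunST; ring
        _ ≤ (t-s) ^ (-(1:ℝ)/2) * (1 * e0) :=
              mul_le_mul_of_nonneg_left (mul_le_mul hB hE (Real.exp_pos _).le zero_le_one) hA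
        _ = (t-s) ^ (-(1:ℝ)/2) * e0 := by ring
      have hcont : IntervalIntegrable (fun s => (t - s) ^ (-(1:ℝ)/2) * e0) volume (t/2) t :=
        (hInthST (t := t) (t/2) t).mul_const e0
      calc ∫ s in (t/2)..t, gfunST α ε t s
          ≤ ∫ s in (t/2)..t, (t - s) ^ (-(1:ℝ)/2) * e0 :=
            intervalIntegral.integral_mono_on (by linarith) hIg2 hcont hpt
      _ = (∫ s in (t/2)..t, (t - s) ^ (-(1:ℝ)/2)) * e0 := by
            rw [intervalIntegral.integral_mul_const]
      _ = 2 * (t - t/2) ^ ((1:ℝ)/2) * e0 := by rw [hHST]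
      _ = 2 * (t/2) ^ ((1:ℝ)/2) * e0 := by rw [show t - t/2 = t/2 by ring]
    -- assemble
    have p0 : (0:ℝ) ≤ (1+t) ^ ((1:ℝ)/4) := Real.rpow_nonneg (by linarith) _
    have he0nn : (0:ℝ) ≤ e0 := (Real.exp_pos _).le
    have hterm1 : (1+t) ^ ((1:ℝ)/4) * (∫ s in (0:ℝ)..(t/2), gfunST α ε t s)
        ≤ (2/α) * ε ^ ((2:ℝ)/3) := by
      have ht' : t ^ (-(1:ℝ)/2) ≤ ε ^ (-(2:ℝ)/3) := by
        calc t ^ (-(1:ℝ)/2) ≤ (ε ^ ((4:ℝ)/3)) ^ (-(1:ℝ)/2) :=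
              Real.rpow_le_rpow_of_nonpos (Real.rpow_pos_of_pos hε0 _) hcase (by norm_num)
        _ = ε ^ (-(2:ℝ)/3) := by rw [← Real.rpow_mul hε0.le]; norm_num
      have s6 : ε ^ (-(2:ℝ)/3) * ε^2 = ε ^ ((4:ℝ)/3) := by
        rw [← Real.rpow_natCast ε 2, ← Real.rpow_add hε0]; norm_num
      calc (1+t) ^ ((1:ℝ)/4) * (∫ s in (0:ℝ)..(t/2), gfunST α ε t s)
          ≤ (1+t) ^ ((1:ℝ)/4) * (K * (ε^2/α)) := mul_le_mul_of_nonneg_left hIA p0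
      _ = ((1+t) ^ ((1:ℝ)/4) * K) * (ε^2/α) := by ring
      _ ≤ (2 * t ^ (-(1:ℝ)/2)) * (ε^2/α) :=
            mul_le_mul_of_nonneg_right (aux_hKey ht0) (by positivity)
      _ ≤ (2 * ε ^ (-(2:ℝ)/3)) * (ε^2/α) := by
            have h9 : 2 * t ^ (-(1:ℝ)/2) ≤ 2 * ε ^ (-(2:ℝ)/3) := by linarith
            exact mul_le_mul_of_nonneg_right h9 (by positivity)
      _ = (2/α) * (ε ^ (-(2:ℝ)/3) * ε^2) := by ring
      _ = (2/α) * ε ^ ((4:ℝ)/3) := by rw [s6]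
      _ ≤ (2/α) * ε ^ ((2:ℝ)/3) :=
            mul_le_mul_of_nonneg_left
              (Real.rpow_le_rpow_of_exponent_ge hε0 hε1 (by norm_num)) (by positivity)
    have hc2 : (0:ℝ) < α / (2 * ε^2) := by positivity
    have hinvc : 1 / (α / (2 * ε^2)) = (2/α) * ε^2 := by field_simp
    have he0eq : ∀ p : ℝ, t ^ p * e0 ≤ ((2/α) * ε^2) ^ p → True := fun _ _ => trivial
    have he0' : e0 = Real.exp (-((α / (2 * ε^2)) * t)) := by
      rw [he0def]; congr 1; field_simp
    have hterm2 : (1+t) ^ ((1:ℝ)/4) * (∫ s in (t/2)..t, gfunST α ε t s)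
        ≤ 4 * (2/α) ^ ((1:ℝ)/2) * ε ^ ((2:ℝ)/3) + 4 * (2/α) ^ ((3:ℝ)/4) * ε ^ ((2:ℝ)/3) := by
      have hIB' : (1+t) ^ ((1:ℝ)/4) * (∫ s in (t/2)..t, gfunST α ε t s)
          ≤ (1+t) ^ ((1:ℝ)/4) * (2 * t ^ ((1:ℝ)/2) * e0) := by
        apply mul_le_mul_of_nonneg_left _ p0
        calc ∫ s in (t/2)..t, gfunST α ε t s ≤ 2 * (t/2) ^ ((1:ℝ)/2) * e0 := hIB
        _ ≤ 2 * t ^ ((1:ℝ)/2) * e0 := by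
              have := Real.rpow_le_rpow (by linarith : (0:ℝ) ≤ t/2)
                (by linarith : t/2 ≤ t) (by norm_num : (0:ℝ) ≤ (1:ℝ)/2)
              nlinarith [he0nn]
      rcases le_total t 1 with ht1 | ht1
      · -- t ≤ 1
        have hpre : (1+t) ^ ((1:ℝ)/4) ≤ 2 := by
          calc (1+t) ^ ((1:ℝ)/4) ≤ 2 ^ ((1:ℝ)/4) :=
                Real.rpow_le_rpow (by linarith) (by linarith) (by norm_num)
          _ ≤ 2 ^ (1:ℝ) := Real.rpow_le_rpow_of_exponent_le one_le_two (by norm_num)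
          _ = 2 := Real.rpow_one 2
        have hte : t ^ ((1:ℝ)/2) * e0 ≤ (2/α) ^ ((1:ℝ)/2) * ε := by
          rw [he0']
          calc t ^ ((1:ℝ)/2) * Real.exp (-((α / (2 * ε^2)) * t))
              ≤ (1 / (α / (2 * ε^2))) ^ ((1:ℝ)/2) :=
                aux_rpexp hc2 ht (by norm_num) (by norm_num)
          _ = ((2/α) * ε^2) ^ ((1:ℝ)/2) := by rw [hinvc]
          _ = (2/α) ^ ((1:ℝ)/2) * (ε^2) ^ ((1:ℝ)/2) :=
                Real.mul_rpow (by positivity) (by positivity)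
          _ = (2/α) ^ ((1:ℝ)/2) * ε := by rw [hεsq]
        have hblock : 2 * t ^ ((1:ℝ)/2) * e0 ≤ 2 * ((2/α) ^ ((1:ℝ)/2) * ε) := by
          have htnn : (0:ℝ) ≤ t ^ ((1:ℝ)/2) := Real.rpow_nonneg ht _
          nlinarith [hte]
        have hfin : (1+t) ^ ((1:ℝ)/4) * (2 * t ^ ((1:ℝ)/2) * e0)
            ≤ 2 * (2 * ((2/α) ^ ((1:ℝ)/2) * ε)) := by
          apply mul_le_mul hpre hblock _ (by norm_num)
          positivity
        have : 2 * (2 * ((2/α) ^ ((1:ℝ)/2) * ε)) ≤ 4 * (2/α) ^ ((1:ℝ)/2) * ε ^ ((2:ℝ)/3) := by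
          nlinarith [mul_le_mul_of_nonneg_left heps1 hX]
        nlinarith [mul_nonneg hY he23.le]
      · -- 1 ≤ t
        have hpre : (1+t) ^ ((1:ℝ)/4) ≤ 2 * t ^ ((1:ℝ)/4) := by
          have htnn : (0:ℝ) ≤ t ^ ((1:ℝ)/4) := Real.rpow_nonneg ht _
          calc (1+t) ^ ((1:ℝ)/4) ≤ (2*t) ^ ((1:ℝ)/4) :=
                Real.rpow_le_rpow (by linarith) (by linarith) (by norm_num)
          _ = 2 ^ ((1:ℝ)/4) * t ^ ((1:ℝ)/4) := Real.mul_rpow (by norm_num) ht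
          _ ≤ 2 * t ^ ((1:ℝ)/4) := by
                apply mul_le_mul_of_nonneg_right _ htnn
                calc (2:ℝ) ^ ((1:ℝ)/4) ≤ 2 ^ (1:ℝ) :=
                      Real.rpow_le_rpow_of_exponent_le one_le_two (by norm_num)
                _ = 2 := Real.rpow_one 2
        have ht34 : t ^ ((1:ℝ)/4) * t ^ ((1:ℝ)/2) = t ^ ((3:ℝ)/4) := by
          rw [← Real.rpow_add ht0]; norm_num
        have hte : t ^ ((3:ℝ)/4) * e0 ≤ (2/α) ^ ((3:ℝ)/4) * ε ^ ((3:ℝ)/2) := by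
          rw [he0']
          calc t ^ ((3:ℝ)/4) * Real.exp (-((α / (2 * ε^2)) * t))
              ≤ (1 / (α / (2 * ε^2))) ^ ((3:ℝ)/4) :=
                aux_rpexp hc2 ht (by norm_num) (by norm_num)
          _ = ((2/α) * ε^2) ^ ((3:ℝ)/4) := by rw [hinvc]
          _ = (2/α) ^ ((3:ℝ)/4) * (ε^2) ^ ((3:ℝ)/4) :=
                Real.mul_rpow (by positivity) (by positivity)
          _ = (2/α) ^ ((3:ℝ)/4) * ε ^ ((3:ℝ)/2) := by rw [hεsq34]
        have hfin : (1+t) ^ ((1:ℝ)/4) * (2 * t ^ ((1:ℝ)/2) * e0)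
            ≤ 4 * (t ^ ((3:ℝ)/4) * e0) := by
          have htnn2 : (0:ℝ) ≤ t ^ ((1:ℝ)/2) := Real.rpow_nonneg ht _
          have h1 : (1+t) ^ ((1:ℝ)/4) * (2 * t ^ ((1:ℝ)/2) * e0)
              ≤ (2 * t ^ ((1:ℝ)/4)) * (2 * t ^ ((1:ℝ)/2) * e0) := by
            apply mul_le_mul_of_nonneg_right hpre (by positivity)
          have h2 : (2 * t ^ ((1:ℝ)/4)) * (2 * t ^ ((1:ℝ)/2) * e0)
              = 4 * ((t ^ ((1:ℝ)/4) * t ^ ((1:ℝ)/2)) * e0) := by ring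
          rw [h2, ht34] at h1
          linarith
        have h3 : 4 * (t ^ ((3:ℝ)/4) * e0) ≤ 4 * ((2/α) ^ ((3:ℝ)/4) * ε ^ ((3:ℝ)/2)) := by
          linarith
        have h4 : 4 * ((2/α) ^ ((3:ℝ)/4) * ε ^ ((3:ℝ)/2)) ≤ 4 * (2/α) ^ ((3:ℝ)/4) * ε ^ ((2:ℝ)/3) := by
          nlinarith [mul_le_mul_of_nonneg_left heps32 hY]
        nlinarith [mul_nonneg hX he23.le]
    calc (1+t) ^ ((1:ℝ)/4) * (∫ s in (0:ℝ)..t, gfunST α ε t s)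
        = (1+t) ^ ((1:ℝ)/4) * (∫ s in (0:ℝ)..(t/2), gfunST α ε t s)
          + (1+t) ^ ((1:ℝ)/4) * (∫ s in (t/2)..t, gfunST α ε t s) := by
          rw [← hsplit]; ring
    _ ≤ (2/α) * ε ^ ((2:ℝ)/3)
          + (4 * (2/α) ^ ((1:ℝ)/2) * ε ^ ((2:ℝ)/3) + 4 * (2/α) ^ ((3:ℝ)/4) * ε ^ ((2:ℝ)/3)) :=
          add_le_add hterm1 hterm2
    _ ≤ (4 + 2/α + 4*(2/α) ^ ((1:ℝ)/2) + 4*(2/α) ^ ((3:ℝ)/4)) * ε ^ ((2:ℝ)/3) := by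
          nlinarith [he23.le]
end

section
/- For every α > 0 there exists a constant C > 0 such that for every ε ∈ (0,1] and every t ≥ 0, ∫_0^t (t−s)^{−1/2} (1+(t−s))^{−3/4} e^{−α s/ε²} ds ≤ C ε^{2/3}. -/
open MeasureTheory Set

lemma g_meas : Measurable (fun u : ℝ => u ^ (-(1:ℝ)/2) * (1+u) ^ (-(3:ℝ)/4)) := by
  exact (measurable_id.pow_const _).mul ((measurable_const.add measurable_id).pow_const _)

lemma g_integrable : IntegrableOn
    (fun u : ℝ => u ^ (-(1:ℝ)/2) * (1+u) ^ (-(3:ℝ)/4)) (Set.Ioi 0) := by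
  have h1 : IntegrableOn (fun u : ℝ => u ^ (-(1:ℝ)/2) * (1+u) ^ (-(3:ℝ)/4)) (Set.Ioc 0 1) := by
    have hint : IntegrableOn (fun u : ℝ => u ^ (-(1:ℝ)/2)) (Set.Ioc 0 1) := by
      have := intervalIntegral.intervalIntegrable_rpow' (a := 0) (b := 1) (r := -(1:ℝ)/2)
        (by norm_num)
      rwa [intervalIntegrable_iff_integrableOn_Ioc_of_le (by norm_num)] at this
    refine hint.mono' (g_meas.aestronglyMeasurable) ?_
    filter_upwards [ae_restrict_mem measurableSet_Ioc] with u hu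
    have hu0 : 0 < u := hu.1
    have h1u : (1:ℝ) ≤ 1 + u := by linarith
    have := Real.rpow_le_one_of_one_le_of_nonpos h1u (by norm_num : (-(3:ℝ)/4) ≤ 0)
    have hnn : 0 ≤ u ^ (-(1:ℝ)/2) := Real.rpow_nonneg hu0.le _
    have hnn2 : 0 ≤ (1+u) ^ (-(3:ℝ)/4) := Real.rpow_nonneg (by linarith) _
    rw [Real.norm_eq_abs, abs_of_nonneg (mul_nonneg hnn hnn2)]
    calc u ^ (-(1:ℝ)/2) * (1+u) ^ (-(3:ℝ)/4) ≤ u ^ (-(1:ℝ)/2) * 1 := by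
          exact mul_le_mul_of_nonneg_left this hnn
      _ = u ^ (-(1:ℝ)/2) := mul_one _
  have h2 : IntegrableOn (fun u : ℝ => u ^ (-(1:ℝ)/2) * (1+u) ^ (-(3:ℝ)/4)) (Set.Ioi 1) := by
    have hint : IntegrableOn (fun u : ℝ => u ^ (-(5:ℝ)/4)) (Set.Ioi 1) :=
      integrableOn_Ioi_rpow_of_lt (by norm_num) one_pos
    refine hint.mono' (g_meas.aestronglyMeasurable) ?_
    filter_upwards [ae_restrict_mem measurableSet_Ioi] with u hu
    have hu1 : (1:ℝ) < u := hu
    have hu0 : 0 < u := lt_trans one_pos hu1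
    have hnn : 0 ≤ u ^ (-(1:ℝ)/2) := Real.rpow_nonneg hu0.le _
    have hnn2 : 0 ≤ (1+u) ^ (-(3:ℝ)/4) := Real.rpow_nonneg (by linarith) _
    rw [Real.norm_eq_abs, abs_of_nonneg (mul_nonneg hnn hnn2)]
    have hb : (1+u) ^ (-(3:ℝ)/4) ≤ u ^ (-(3:ℝ)/4) :=
      Real.rpow_le_rpow_of_nonpos hu0 (by linarith) (by norm_num)
    calc u ^ (-(1:ℝ)/2) * (1+u) ^ (-(3:ℝ)/4) ≤ u ^ (-(1:ℝ)/2) * u ^ (-(3:ℝ)/4) :=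
          mul_le_mul_of_nonneg_left hb hnn
      _ = u ^ (-(5:ℝ)/4) := by rw [← Real.rpow_add hu0]; norm_num
  have : Set.Ioc (0:ℝ) 1 ∪ Set.Ioi 1 = Set.Ioi 0 := Set.Ioc_union_Ioi_eq_Ioi zero_le_one
  rw [← this]
  exact h1.union h2


set_option maxHeartbeats 1600000 in
/-- Convolution estimate with the fast exponential decay `e^{-α s/ε²}`:
`∫_0^t (t-s)^{-1/2} (1+(t-s))^{-3/4} e^{-α s/ε²} ds ≤ C ε^{2/3}`. -/
theorem stmt_11 (α : ℝ) (hα : 0 < α) :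
    ∃ C : ℝ, 0 < C ∧ ∀ ε : ℝ, ε ∈ Set.Ioc (0 : ℝ) 1 → ∀ t : ℝ, 0 ≤ t →
      (∫ s in Set.Ioo (0 : ℝ) t,
          (t - s) ^ (-(1 : ℝ) / 2) * (1 + (t - s)) ^ (-(3 : ℝ) / 4) *
            Real.exp (-α * s / ε ^ 2)) ≤ C * ε ^ ((2 : ℝ) / 3) := by
  set M : ℝ := ∫ u in Set.Ioi (0:ℝ), u ^ (-(1:ℝ)/2) * (1+u) ^ (-(3:ℝ)/4) with hMdef
  have hM0 : 0 ≤ M := by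
    refine setIntegral_nonneg measurableSet_Ioi (fun u hu => ?_)
    have hu0 : (0:ℝ) < u := hu
    exact mul_nonneg (Real.rpow_nonneg hu0.le _) (Real.rpow_nonneg (by linarith) _)
  refine ⟨2 + M / α, by positivity, ?_⟩
  rintro ε ⟨hε0, hε1⟩ t ht
  have hεp : (0:ℝ) < ε ^ ((2:ℝ)/3) := Real.rpow_pos_of_pos hε0 _
  rcases eq_or_lt_of_le ht with rfl | ht0
  · rw [Set.Ioo_self]
    simp only [Measure.restrict_empty, integral_zero_measure]
    positivity
  set δ : ℝ := ε ^ ((4:ℝ)/3) with hδdef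
  have hδ0 : 0 < δ := Real.rpow_pos_of_pos hε0 _
  set m := min δ t with hmdef
  have hm0 : 0 < m := lt_min hδ0 ht0
  have hmt : m ≤ t := min_le_right _ _
  have hε2 : (0:ℝ) < ε ^ 2 := by positivity
  set F : ℝ → ℝ := fun s => (t - s) ^ (-(1:ℝ)/2) * (1 + (t - s)) ^ (-(3:ℝ)/4) *
    Real.exp (-α * s / ε ^ 2) with hFdef
  set G : ℝ → ℝ := fun s => (t - s) ^ (-(1:ℝ)/2) * (1 + (t - s)) ^ (-(3:ℝ)/4) with hGdef
  have hFmeas : Measurable F := by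
    apply Measurable.mul
    · exact g_meas.comp (measurable_const.sub measurable_id)
    · exact ((measurable_id.const_mul (-α)).div_const (ε^2)).exp
  have hFbound : ∀ s ∈ Set.Ioo (0:ℝ) t, F s ≤ (t - s) ^ (-(1:ℝ)/2) := by
    intro s hs
    have hts : 0 < t - s := by linarith [hs.2]
    have ha : 0 ≤ (t - s) ^ (-(1:ℝ)/2) := Real.rpow_nonneg hts.le _
    have hb1 : (1 + (t - s)) ^ (-(3:ℝ)/4) ≤ 1 :=
      Real.rpow_le_one_of_one_le_of_nonpos (by linarith) (by norm_num)
    have hb0 : 0 ≤ (1 + (t - s)) ^ (-(3:ℝ)/4) := Real.rpow_nonneg (by linarith) _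
    have hc1 : Real.exp (-α * s / ε ^ 2) ≤ 1 := by
      rw [Real.exp_le_one_iff]
      apply div_nonpos_of_nonpos_of_nonneg _ hε2.le
      nlinarith [hs.1]
    calc F s ≤ (t - s) ^ (-(1:ℝ)/2) * (1 + (t - s)) ^ (-(3:ℝ)/4) * 1 :=
          mul_le_mul_of_nonneg_left hc1 (mul_nonneg ha hb0)
      _ = (t - s) ^ (-(1:ℝ)/2) * (1 + (t - s)) ^ (-(3:ℝ)/4) := mul_one _
      _ ≤ (t - s) ^ (-(1:ℝ)/2) * 1 := mul_le_mul_of_nonneg_left hb1 ha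
      _ = (t - s) ^ (-(1:ℝ)/2) := mul_one _
  have hFnonneg : ∀ s ∈ Set.Ioo (0:ℝ) t, 0 ≤ F s := by
    intro s hs
    have hts : 0 < t - s := by linarith [hs.2]
    exact mul_nonneg (mul_nonneg (Real.rpow_nonneg hts.le _)
      (Real.rpow_nonneg (by linarith) _)) (Real.exp_pos _).le
  have hdom : IntegrableOn (fun s => (t - s) ^ (-(1:ℝ)/2)) (Set.Ioo 0 t) := by
    have h0 : IntervalIntegrable (fun u : ℝ => u ^ (-(1:ℝ)/2)) volume 0 t :=
      intervalIntegral.intervalIntegrable_rpow' (by norm_num)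
    have h1 := (h0.comp_sub_left t).symm
    rw [sub_zero, sub_self] at h1
    rwa [intervalIntegrable_iff_integrableOn_Ioo_of_le ht] at h1
  have hFint : IntegrableOn F (Set.Ioo 0 t) := by
    refine hdom.mono' hFmeas.aestronglyMeasurable ?_
    filter_upwards [ae_restrict_mem measurableSet_Ioo] with s hs
    rw [Real.norm_eq_abs, abs_of_nonneg (hFnonneg s hs)]
    exact hFbound s hs
  have hunion : Set.Ioo (0:ℝ) m ∪ Set.Ico m t = Set.Ioo (0:ℝ) t := by
    ext x
    simp only [Set.mem_union, Set.mem_Ioo, Set.mem_Ico]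
    constructor
    · rintro (⟨h1, h2⟩ | ⟨h1, h2⟩)
      · exact ⟨h1, lt_of_lt_of_le h2 hmt⟩
      · exact ⟨lt_of_lt_of_le hm0 h1, h2⟩
    · rintro ⟨h1, h2⟩
      rcases lt_or_ge x m with h | h
      · exact Or.inl ⟨h1, h⟩
      · exact Or.inr ⟨h, h2⟩
  have hsub1 : Set.Ioo (0:ℝ) m ⊆ Set.Ioo (0:ℝ) t := by
    rw [← hunion]; exact Set.subset_union_left
  have hsub2 : Set.Ico m t ⊆ Set.Ioo (0:ℝ) t := by
    rw [← hunion]; exact Set.subset_union_right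
  have hdisj : Disjoint (Set.Ioo (0:ℝ) m) (Set.Ico m t) :=
    Set.disjoint_left.2 fun x hx hx' => absurd hx.2 (not_lt.2 hx'.1)
  have hsplit : (∫ s in Set.Ioo (0:ℝ) t, F s) =
      (∫ s in Set.Ioo (0:ℝ) m, F s) + ∫ s in Set.Ico m t, F s := by
    rw [← hunion, setIntegral_union hdisj measurableSet_Ico
      (hFint.mono_set hsub1) (hFint.mono_set hsub2)]
  have hδhalf : δ ^ ((1:ℝ)/2) = ε ^ ((2:ℝ)/3) := by
    rw [hδdef, ← Real.rpow_mul hε0.le]; norm_num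
  -- Part A
  have hA : (∫ s in Set.Ioo (0:ℝ) m, F s) ≤ 2 * ε ^ ((2:ℝ)/3) := by
    have step1 : (∫ s in Set.Ioo (0:ℝ) m, F s) ≤
        ∫ s in Set.Ioo (0:ℝ) m, (t - s) ^ (-(1:ℝ)/2) :=
      setIntegral_mono_on (hFint.mono_set hsub1) (hdom.mono_set hsub1)
        measurableSet_Ioo (fun s hs => hFbound s (hsub1 hs))
    have step2 : (∫ s in Set.Ioo (0:ℝ) m, (t - s) ^ (-(1:ℝ)/2)) =
        ((t:ℝ) ^ (-(1:ℝ)/2 + 1) - (t - m) ^ (-(1:ℝ)/2 + 1)) / (-(1:ℝ)/2 + 1) := by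
      rw [← integral_Ioc_eq_integral_Ioo, ← intervalIntegral.integral_of_le hm0.le,
        intervalIntegral.integral_comp_sub_left (fun u : ℝ => u ^ (-(1:ℝ)/2)) t,
        sub_zero, integral_rpow (Or.inl (by norm_num))]
    have step3 : ((t:ℝ) ^ (-(1:ℝ)/2 + 1) - (t - m) ^ (-(1:ℝ)/2 + 1)) / (-(1:ℝ)/2 + 1)
        ≤ 2 * ε ^ ((2:ℝ)/3) := by
      have he : (-(1:ℝ)/2 + 1) = (1:ℝ)/2 := by norm_num
      rw [he]
      have htm : 0 ≤ t - m := by linarith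
      have ha := Real.sqrt_nonneg (t - m)
      have hb := Real.sqrt_nonneg m
      have e1 := Real.sq_sqrt htm
      have e2 := Real.sq_sqrt hm0.le
      have key : Real.sqrt t ≤ Real.sqrt (t - m) + Real.sqrt m := by
        have hle : t ≤ (Real.sqrt (t - m) + Real.sqrt m) ^ 2 := by
          nlinarith [mul_nonneg ha hb]
        calc Real.sqrt t ≤ Real.sqrt ((Real.sqrt (t - m) + Real.sqrt m) ^ 2) :=
              Real.sqrt_le_sqrt hle
          _ = Real.sqrt (t - m) + Real.sqrt m := Real.sqrt_sq (by positivity)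
      have h1 : (t:ℝ) ^ ((1:ℝ)/2) - (t - m) ^ ((1:ℝ)/2) ≤ m ^ ((1:ℝ)/2) := by
        rw [← Real.sqrt_eq_rpow, ← Real.sqrt_eq_rpow, ← Real.sqrt_eq_rpow]
        linarith
      have h2 : m ^ ((1:ℝ)/2) ≤ δ ^ ((1:ℝ)/2) :=
        Real.rpow_le_rpow hm0.le (min_le_left _ _) (by norm_num)
      rw [div_le_iff₀ (by norm_num : (0:ℝ) < 1/2)]
      nlinarith [hδhalf]
    calc (∫ s in Set.Ioo (0:ℝ) m, F s) ≤
          ∫ s in Set.Ioo (0:ℝ) m, (t - s) ^ (-(1:ℝ)/2) := step1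
      _ = ((t:ℝ) ^ (-(1:ℝ)/2 + 1) - (t - m) ^ (-(1:ℝ)/2 + 1)) / (-(1:ℝ)/2 + 1) := step2
      _ ≤ 2 * ε ^ ((2:ℝ)/3) := step3
  -- Part B
  have hB : (∫ s in Set.Ico m t, F s) ≤ M / α * ε ^ ((2:ℝ)/3) := by
    have hBnn : 0 ≤ M / α * ε ^ ((2:ℝ)/3) := by positivity
    rcases le_or_gt t δ with hcase | hcase
    · have hmt' : m = t := min_eq_right hcase
      rw [hmt', Set.Ico_self]
      simpa using hBnn
    · have hmδ : m = δ := min_eq_left hcase.le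
      rw [integral_Ico_eq_integral_Ioo]
      have hsub3 : Set.Ioo m t ⊆ Set.Ioo (0:ℝ) t := Set.Ioo_subset_Ioo_left hm0.le
      have hexp : Real.exp (-α * δ / ε ^ 2) ≤ ε ^ ((2:ℝ)/3) / α := by
        have hneg : ε ^ (-(2:ℝ)/3) = (ε ^ ((2:ℝ)/3))⁻¹ := by
          rw [show (-(2:ℝ)/3) = -((2:ℝ)/3) by norm_num, Real.rpow_neg hε0.le]
        have hx : 0 < α * ε ^ (-(2:ℝ)/3) := by
          apply mul_pos hα; rw [hneg]; positivity
        have hδε : δ / ε ^ 2 = ε ^ (-(2:ℝ)/3) := by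
          rw [hδdef, ← Real.rpow_natCast ε 2, ← Real.rpow_sub hε0]; norm_num
        have harg : -α * δ / ε ^ 2 = -(α * ε ^ (-(2:ℝ)/3)) := by
          rw [← hδε]; ring
        rw [harg, Real.exp_neg]
        have hle : α * ε ^ (-(2:ℝ)/3) ≤ Real.exp (α * ε ^ (-(2:ℝ)/3)) := by
          linarith [Real.add_one_le_exp (α * ε ^ (-(2:ℝ)/3))]
        have h1 : (Real.exp (α * ε ^ (-(2:ℝ)/3)))⁻¹ ≤ (α * ε ^ (-(2:ℝ)/3))⁻¹ :=
          inv_anti₀ hx hle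
        refine le_trans h1 (le_of_eq ?_)
        rw [hneg, mul_inv, inv_inv]
        field_simp
      have hmono : ∀ s ∈ Set.Ioo m t, F s ≤ Real.exp (-α * δ / ε ^ 2) * G s := by
        intro s hs
        have hts : 0 < t - s := by linarith [hs.2]
        have hg0 : 0 ≤ G s :=
          mul_nonneg (Real.rpow_nonneg hts.le _) (Real.rpow_nonneg (by linarith) _)
        have hs' : δ ≤ s := by rw [← hmδ]; exact (hs.1).le
        have hexp' : Real.exp (-α * s / ε ^ 2) ≤ Real.exp (-α * δ / ε ^ 2) := by
          apply Real.exp_le_exp.2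
          apply (div_le_div_iff_of_pos_right hε2).2
          nlinarith
        calc F s ≤ G s * Real.exp (-α * δ / ε ^ 2) :=
              mul_le_mul_of_nonneg_left hexp' hg0
          _ = Real.exp (-α * δ / ε ^ 2) * G s := mul_comm _ _
      have hGint : IntegrableOn G (Set.Ioo m t) := by
        have h0 : IntervalIntegrable (fun u : ℝ => u ^ (-(1:ℝ)/2) * (1+u) ^ (-(3:ℝ)/4))
            volume 0 (t - m) := by
          rw [intervalIntegrable_iff_integrableOn_Ioc_of_le (by linarith)]
          exact g_integrable.mono_set Set.Ioc_subset_Ioi_self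
        have h1 := (h0.comp_sub_left t).symm
        rw [sub_zero, sub_sub_cancel] at h1
        rwa [intervalIntegrable_iff_integrableOn_Ioo_of_le hmt] at h1
      have step1 : (∫ s in Set.Ioo m t, F s) ≤
          ∫ s in Set.Ioo m t, Real.exp (-α * δ / ε ^ 2) * G s :=
        setIntegral_mono_on (hFint.mono_set hsub3)
          (hGint.const_mul _) measurableSet_Ioo hmono
      have step3 : (∫ s in Set.Ioo m t, G s) ≤ M := by
        rw [hMdef, hGdef, ← integral_Ioc_eq_integral_Ioo,
          ← intervalIntegral.integral_of_le hmt,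
          intervalIntegral.integral_comp_sub_left
            (fun u : ℝ => u ^ (-(1:ℝ)/2) * (1+u) ^ (-(3:ℝ)/4)) t,
          sub_self,
          intervalIntegral.integral_of_le (by linarith : (0:ℝ) ≤ t - m)]
        refine setIntegral_mono_set g_integrable ?_ ?_
        · filter_upwards [ae_restrict_mem measurableSet_Ioi] with u hu
          have hu0 : (0:ℝ) < u := hu
          exact mul_nonneg (Real.rpow_nonneg hu0.le _) (Real.rpow_nonneg (by linarith) _)
        · exact (Set.Ioc_subset_Ioi_self).eventuallyLE
      have hGnn : 0 ≤ ∫ s in Set.Ioo m t, G s := by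
        refine setIntegral_nonneg measurableSet_Ioo (fun s hs => ?_)
        have hts : 0 < t - s := by linarith [hs.2]
        exact mul_nonneg (Real.rpow_nonneg hts.le _) (Real.rpow_nonneg (by linarith) _)
      calc (∫ s in Set.Ioo m t, F s) ≤
            ∫ s in Set.Ioo m t, Real.exp (-α * δ / ε ^ 2) * G s := step1
        _ = Real.exp (-α * δ / ε ^ 2) * ∫ s in Set.Ioo m t, G s := integral_const_mul _ _
        _ ≤ (ε ^ ((2:ℝ)/3) / α) * M := by
              apply mul_le_mul hexp step3 hGnn (by positivity)
        _ = M / α * ε ^ ((2:ℝ)/3) := by ring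
  have hfinal : (2 + M / α) * ε ^ ((2:ℝ)/3) =
      2 * ε ^ ((2:ℝ)/3) + M / α * ε ^ ((2:ℝ)/3) := by ring
  rw [hsplit]
  linarith [hA, hB]
end

section
/- For every r' ∈ (1,2) there exists a constant C > 0 such that for every t ≥ 0, (1+t)^{r'/4} ∫_0^t (t−s)^{−r'/2} (1+(t−s))^{−r'/2} (1+s)^{−r'/4} ds ≤ C. -/
open MeasureTheory Set intervalIntegral

private lemma ii_sub (c a b e : ℝ) (he : -1 < e) :
    IntervalIntegrable (fun s => (c - s) ^ e) volume a b := by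
  have h := (intervalIntegrable_rpow' (a := c - a) (b := c - b) he).comp_sub_left c
  simpa using h

private lemma intOn_sub (c a b e : ℝ) (he : -1 < e) (hab : a ≤ b) :
    IntegrableOn (fun s => (c - s) ^ e) (Ioc a b) := by
  have h := ii_sub c a b e he
  rwa [intervalIntegrable_iff_integrableOn_Ioc_of_le hab] at h

private lemma ival_sub (c a b e : ℝ) (he : -1 < e) (hab : a ≤ b) :
    ∫ s in Ioc a b, (c - s) ^ e = ((c - a) ^ (e + 1) - (c - b) ^ (e + 1)) / (e + 1) := by
  rw [← intervalIntegral.integral_of_le hab,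
      intervalIntegral.integral_comp_sub_left (fun x => x ^ e) c,
      integral_rpow (Or.inl he)]

private lemma intOn_sub' (c a b e : ℝ) (hab : a ≤ b) (hb : 0 < c - b) :
    IntegrableOn (fun s => (c - s) ^ e) (Ioc a b) := by
  have h0 : (0:ℝ) ∉ uIcc (c - a) (c - b) := notMem_uIcc_of_lt (by linarith) hb
  have h := (intervalIntegrable_rpow (r := e) (a := c - a) (b := c - b)
      (μ := volume) (Or.inr h0)).comp_sub_left c
  simp only [sub_sub_cancel] at h
  rwa [intervalIntegrable_iff_integrableOn_Ioc_of_le hab] at h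

private lemma ival_sub' (c a b e : ℝ) (he : e ≠ -1) (hab : a ≤ b) (hb : 0 < c - b) :
    ∫ s in Ioc a b, (c - s) ^ e = ((c - a) ^ (e + 1) - (c - b) ^ (e + 1)) / (e + 1) := by
  rw [← intervalIntegral.integral_of_le hab,
      intervalIntegral.integral_comp_sub_left (fun x => x ^ e) c,
      integral_rpow (Or.inr ⟨he, notMem_uIcc_of_lt hb (by linarith)⟩)]

private lemma intOn_add (a b e : ℝ) (he : -1 < e) (hab : a ≤ b) :
    IntegrableOn (fun s => (1 + s) ^ e) (Ioc a b) := by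
  have h := (intervalIntegrable_rpow' (a := 1 + a) (b := 1 + b) he).comp_add_left 1
  simp only [add_sub_cancel_left] at h
  rwa [intervalIntegrable_iff_integrableOn_Ioc_of_le hab] at h

private lemma ival_add (a b e : ℝ) (he : -1 < e) (hab : a ≤ b) :
    ∫ s in Ioc a b, (1 + s) ^ e = ((1 + b) ^ (e + 1) - (1 + a) ^ (e + 1)) / (e + 1) := by
  rw [← intervalIntegral.integral_of_le hab,
      intervalIntegral.integral_comp_add_left (fun x => x ^ e) 1,
      integral_rpow (Or.inl he)]

set_option maxHeartbeats 1000000 in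
/-- Uniform-in-time convolution estimate arising from Hölder's inequality with
exponent `r' ∈ (1,2)`:
`(1+t)^{r'/4} ∫_0^t (t-s)^{-r'/2} (1+(t-s))^{-r'/2} (1+s)^{-r'/4} ds ≤ C`. -/
theorem stmt_12 (r' : ℝ) (hr' : r' ∈ Set.Ioo (1 : ℝ) 2) :
    ∃ C : ℝ, 0 < C ∧ ∀ t : ℝ, 0 ≤ t →
      (1 + t) ^ (r' / 4) *
          ∫ s in Set.Ioo (0 : ℝ) t,
            (t - s) ^ (-r' / 2) * (1 + (t - s)) ^ (-r' / 2) * (1 + s) ^ (-r' / 4) ≤ C := by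
  obtain ⟨h1, h2⟩ := hr'
  have hb : (-1:ℝ) < -r' / 2 := by linarith
  have hg : (-1:ℝ) < -r' / 4 := by linarith
  have hbneg : -r' / 2 ≤ 0 := by linarith
  have hgneg : -r' / 4 ≤ 0 := by linarith
  have hd1 : (0:ℝ) < 1 - r' / 2 := by linarith
  have hd2 : (0:ℝ) < 1 - r' / 4 := by linarith
  have hd3 : (0:ℝ) < r' - 1 := by linarith
  have hp1 : (0:ℝ) < 6 / (1 - r' / 2) := by positivity
  have hp2 : (0:ℝ) < 2 / (1 - r' / 2) := by positivity
  have hp3 : (0:ℝ) < 8 / (1 - r' / 4) := by positivity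
  have hp4 : (0:ℝ) < 4 / (r' - 1) := by positivity
  refine ⟨6 / (1 - r' / 2) + 2 / (1 - r' / 2) + 8 / (1 - r' / 4) + 4 / (r' - 1),
    by linarith, ?_⟩
  intro t ht
  set F : ℝ → ℝ :=
    fun s => (t - s) ^ (-r' / 2) * (1 + (t - s)) ^ (-r' / 2) * (1 + s) ^ (-r' / 4) with hF
  have hFnn : ∀ s ∈ Ioo (0:ℝ) t, 0 ≤ F s := by
    intro s hs
    have h1s : (0:ℝ) ≤ t - s := by linarith [hs.2]
    have h2s : (0:ℝ) ≤ 1 + (t - s) := by linarith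
    have h3s : (0:ℝ) ≤ 1 + s := by linarith [hs.1]
    exact mul_nonneg (mul_nonneg (Real.rpow_nonneg h1s _) (Real.rpow_nonneg h2s _))
      (Real.rpow_nonneg h3s _)
  have hmF : Measurable F := by fun_prop
  have hD : IntegrableOn (fun s => (t - s) ^ (-r' / 2)) (Ioo 0 t) :=
    (intOn_sub t 0 t _ hb ht).mono_set Ioo_subset_Ioc_self
  have hFD : ∀ s ∈ Ioo (0:ℝ) t, F s ≤ (t - s) ^ (-r' / 2) := by
    intro s hs
    have hts : (0:ℝ) < t - s := by linarith [hs.2]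
    have hA : (0:ℝ) ≤ (t - s) ^ (-r' / 2) := Real.rpow_nonneg hts.le _
    have hB : (1 + (t - s)) ^ (-r' / 2) ≤ 1 :=
      Real.rpow_le_one_of_one_le_of_nonpos (by linarith) hbneg
    have hBnn : (0:ℝ) ≤ (1 + (t - s)) ^ (-r' / 2) := Real.rpow_nonneg (by linarith) _
    have hC : (1 + s) ^ (-r' / 4) ≤ 1 :=
      Real.rpow_le_one_of_one_le_of_nonpos (by linarith [hs.1]) hgneg
    have hCnn : (0:ℝ) ≤ (1 + s) ^ (-r' / 4) := Real.rpow_nonneg (by linarith [hs.1]) _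
    calc F s ≤ ((t - s) ^ (-r' / 2) * 1) * 1 := by
          exact mul_le_mul (mul_le_mul le_rfl hB hBnn hA) hC hCnn
            (by simpa using hA)
      _ = (t - s) ^ (-r' / 2) := by ring
  have hIntF : IntegrableOn F (Ioo 0 t) := by
    apply Integrable.mono hD (hmF.aestronglyMeasurable)
    filter_upwards [ae_restrict_mem measurableSet_Ioo] with s hs
    rw [Real.norm_eq_abs, Real.norm_eq_abs, abs_of_nonneg (hFnn s hs),
      abs_of_nonneg (Real.rpow_nonneg (by linarith [hs.2]) _)]
    exact hFD s hs
  have hInn : 0 ≤ ∫ s in Ioo (0:ℝ) t, F s := setIntegral_nonneg measurableSet_Ioo hFnn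
  have hPnn : (0:ℝ) ≤ (1 + t) ^ (r' / 4) := Real.rpow_nonneg (by linarith) _
  rcases le_or_gt t 2 with hcase | hcase
  · -- small time : t ≤ 2
    have key : ∫ s in Ioo (0:ℝ) t, F s ≤ 2 / (1 - r' / 2) := by
      have e1 : ∫ s in Ioo (0:ℝ) t, F s ≤ ∫ s in Ioo (0:ℝ) t, (t - s) ^ (-r' / 2) :=
        setIntegral_mono_on hIntF hD measurableSet_Ioo hFD
      have e2 : ∫ s in Ioo (0:ℝ) t, (t - s) ^ (-r' / 2)
          = (t ^ (-r' / 2 + 1) - 0 ^ (-r' / 2 + 1)) / (-r' / 2 + 1) := by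
        rw [← integral_Ioc_eq_integral_Ioo, ival_sub t 0 t _ hb ht, sub_zero, sub_self]
      have e3 : (0:ℝ) ^ (-r' / 2 + 1) = 0 := Real.zero_rpow (by linarith)
      have e4 : t ^ (-r' / 2 + 1) ≤ 2 := by
        calc t ^ (-r' / 2 + 1) ≤ (2:ℝ) ^ (-r' / 2 + 1) :=
              Real.rpow_le_rpow ht hcase (by linarith)
          _ ≤ (2:ℝ) ^ (1:ℝ) :=
              Real.rpow_le_rpow_of_exponent_le (by norm_num) (by linarith)
          _ = 2 := Real.rpow_one 2
      calc ∫ s in Ioo (0:ℝ) t, F s ≤ ∫ s in Ioo (0:ℝ) t, (t - s) ^ (-r' / 2) := e1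
        _ = t ^ (-r' / 2 + 1) / (-r' / 2 + 1) := by rw [e2, e3, sub_zero]
        _ ≤ 2 / (-r' / 2 + 1) := (div_le_div_iff_of_pos_right (by linarith)).mpr e4
        _ = 2 / (1 - r' / 2) := by rw [show -r' / 2 + 1 = 1 - r' / 2 by ring]
    have hpre : (1 + t) ^ (r' / 4) ≤ 3 := by
      calc (1 + t) ^ (r' / 4) ≤ (3:ℝ) ^ (r' / 4) :=
            Real.rpow_le_rpow (by linarith) (by linarith) (by linarith)
        _ ≤ (3:ℝ) ^ (1:ℝ) :=
            Real.rpow_le_rpow_of_exponent_le (by norm_num) (by linarith)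
        _ = 3 := Real.rpow_one 3
    have : (1 + t) ^ (r' / 4) * ∫ s in Ioo (0:ℝ) t, F s ≤ 3 * (2 / (1 - r' / 2)) :=
      mul_le_mul hpre key hInn (by norm_num)
    have h36 : 3 * (2 / (1 - r' / 2)) = 6 / (1 - r' / 2) := by ring
    linarith
  · -- large time : 2 < t
    have ht0 : (0:ℝ) < t := by linarith
    have h2t : (2:ℝ) ≤ t := hcase.le
    have hhalf : (0:ℝ) < t / 2 := by linarith
    have hhalf1 : (1:ℝ) ≤ t / 2 := by linarith
    have hsplit1 : t / 2 ≤ t - 1 := by linarith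
    have ht1 : t - 1 < t := by linarith
    have h0t1 : (0:ℝ) < t - 1 := by linarith
    -- the three pieces
    have hsubA : Ioc (0:ℝ) (t / 2) ⊆ Ioo (0:ℝ) t :=
      fun x hx => ⟨hx.1, lt_of_le_of_lt hx.2 (by linarith)⟩
    have hsubB : Ioc (t / 2) (t - 1) ⊆ Ioo (0:ℝ) t :=
      fun x hx => ⟨lt_trans hhalf hx.1, lt_of_le_of_lt hx.2 ht1⟩
    have hsubC : Ioo (t - 1) t ⊆ Ioo (0:ℝ) t :=
      fun x hx => ⟨lt_trans h0t1 hx.1, hx.2⟩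
    have hsubAB : Ioc (0:ℝ) (t - 1) ⊆ Ioo (0:ℝ) t :=
      fun x hx => ⟨hx.1, lt_of_le_of_lt hx.2 ht1⟩
    have hIA : IntegrableOn F (Ioc 0 (t / 2)) := hIntF.mono_set hsubA
    have hIB : IntegrableOn F (Ioc (t / 2) (t - 1)) := hIntF.mono_set hsubB
    have hIC : IntegrableOn F (Ioo (t - 1) t) := hIntF.mono_set hsubC
    have hIAB : IntegrableOn F (Ioc 0 (t - 1)) := hIntF.mono_set hsubAB
    have hdisj1 : Disjoint (Ioc (0:ℝ) (t / 2)) (Ioc (t / 2) (t - 1)) :=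
      Set.disjoint_left.mpr fun x hx hx' => absurd hx.2 (not_le.mpr hx'.1)
    have hdisj2 : Disjoint (Ioc (0:ℝ) (t - 1)) (Ioo (t - 1) t) :=
      Set.disjoint_left.mpr fun x hx hx' => absurd hx.2 (not_le.mpr hx'.1)
    have hsplit : ∫ s in Ioo (0:ℝ) t, F s
        = (∫ s in Ioc (0:ℝ) (t / 2), F s) + (∫ s in Ioc (t / 2) (t - 1), F s)
          + ∫ s in Ioo (t - 1) t, F s := by
      have e2 : ∫ s in Ioo (0:ℝ) t, F s
          = (∫ s in Ioc (0:ℝ) (t - 1), F s) + ∫ s in Ioo (t - 1) t, F s := by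
        rw [← Ioc_union_Ioo_eq_Ioo h0t1.le ht1]
        exact setIntegral_union hdisj2 measurableSet_Ioo hIAB hIC
      have e1 : ∫ s in Ioc (0:ℝ) (t - 1), F s
          = (∫ s in Ioc (0:ℝ) (t / 2), F s) + ∫ s in Ioc (t / 2) (t - 1), F s := by
        rw [← Ioc_union_Ioc_eq_Ioc hhalf.le hsplit1]
        exact setIntegral_union hdisj1 measurableSet_Ioc hIA hIB
      rw [e2, e1]
    -- nonnegativity of each piece
    have hnnA : 0 ≤ ∫ s in Ioc (0:ℝ) (t / 2), F s :=
      setIntegral_nonneg measurableSet_Ioc fun s hs => hFnn s (hsubA hs)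
    have hnnB : 0 ≤ ∫ s in Ioc (t / 2) (t - 1), F s :=
      setIntegral_nonneg measurableSet_Ioc fun s hs => hFnn s (hsubB hs)
    have hnnC : 0 ≤ ∫ s in Ioo (t - 1) t, F s :=
      setIntegral_nonneg measurableSet_Ioo fun s hs => hFnn s (hsubC hs)
    -- prefactor bound
    have hpre : (1 + t) ^ (r' / 4) ≤ 2 * t ^ (r' / 4) := by
      calc (1 + t) ^ (r' / 4) ≤ (2 * t) ^ (r' / 4) :=
            Real.rpow_le_rpow (by linarith) (by linarith) (by linarith)
        _ = (2:ℝ) ^ (r' / 4) * t ^ (r' / 4) := Real.mul_rpow (by norm_num) ht0.le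
        _ ≤ (2:ℝ) ^ (1:ℝ) * t ^ (r' / 4) := by
            apply mul_le_mul_of_nonneg_right _ (Real.rpow_nonneg ht0.le _)
            exact Real.rpow_le_rpow_of_exponent_le (by norm_num) (by linarith)
        _ = 2 * t ^ (r' / 4) := by rw [Real.rpow_one]
    have h2le : (2:ℝ) ^ (r' / 4) ≤ 2 := by
      calc (2:ℝ) ^ (r' / 4) ≤ (2:ℝ) ^ (1:ℝ) :=
            Real.rpow_le_rpow_of_exponent_le (by norm_num) (by linarith)
        _ = 2 := Real.rpow_one 2
    have h4le : (2:ℝ) ^ r' ≤ 4 := by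
      calc (2:ℝ) ^ r' ≤ (2:ℝ) ^ (2:ℝ) :=
            Real.rpow_le_rpow_of_exponent_le (by norm_num) (by linarith)
        _ = 4 := by
            rw [show (2:ℝ) = ((2:ℕ):ℝ) by norm_num, Real.rpow_natCast]; norm_num
    ------------------------------------------------------------------ piece A
    have hA : ∫ s in Ioc (0:ℝ) (t / 2), F s
        ≤ 4 * t ^ (-r') * (t ^ (-r' / 4 + 1) / (-r' / 4 + 1)) := by
      set KA : ℝ := (t / 2) ^ (-r' / 2) * (t / 2) ^ (-r' / 2) with hKA
      have hKAnn : 0 ≤ KA := mul_nonneg (Real.rpow_nonneg hhalf.le _)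
        (Real.rpow_nonneg hhalf.le _)
      have hgint : IntegrableOn (fun s => KA * (1 + s) ^ (-r' / 4)) (Ioc 0 (t / 2)) :=
        (intOn_add 0 (t / 2) _ hg hhalf.le).const_mul KA
      have hle : ∀ s ∈ Ioc (0:ℝ) (t / 2), F s ≤ KA * (1 + s) ^ (-r' / 4) := by
        intro s hs
        have hs1 : 0 < s := hs.1
        have hs2 : s ≤ t / 2 := hs.2
        have ha1 : (t - s) ^ (-r' / 2) ≤ (t / 2) ^ (-r' / 2) :=
          Real.rpow_le_rpow_of_nonpos hhalf (by linarith) hbneg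
        have ha2 : (1 + (t - s)) ^ (-r' / 2) ≤ (t / 2) ^ (-r' / 2) :=
          Real.rpow_le_rpow_of_nonpos hhalf (by linarith) hbneg
        have hBnn : (0:ℝ) ≤ (1 + (t - s)) ^ (-r' / 2) :=
          Real.rpow_nonneg (by linarith) _
        have hAnn : (0:ℝ) ≤ (t - s) ^ (-r' / 2) := Real.rpow_nonneg (by linarith) _
        have hCnn : (0:ℝ) ≤ (1 + s) ^ (-r' / 4) := Real.rpow_nonneg (by linarith) _
        exact mul_le_mul (mul_le_mul ha1 ha2 hBnn (Real.rpow_nonneg hhalf.le _))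
          le_rfl hCnn hKAnn
      have hKAle : KA ≤ 4 * t ^ (-r') := by
        have e0 : KA = (t / 2) ^ (-r') := by
          rw [hKA, ← Real.rpow_add hhalf, show -r' / 2 + -r' / 2 = -r' by ring]
        have e1 : (t / 2) ^ (-r') = t ^ (-r') * (2:ℝ) ^ r' := by
          rw [Real.div_rpow ht0.le (by norm_num : (0:ℝ) ≤ 2),
            Real.rpow_neg (by norm_num : (0:ℝ) ≤ 2), div_eq_mul_inv, inv_inv]
        rw [e0, e1]
        calc t ^ (-r') * (2:ℝ) ^ r' ≤ t ^ (-r') * 4 :=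
              mul_le_mul_of_nonneg_left h4le (Real.rpow_nonneg ht0.le _)
          _ = 4 * t ^ (-r') := by ring
      have hJ : ∫ s in Ioc (0:ℝ) (t / 2), (1 + s) ^ (-r' / 4)
          ≤ t ^ (-r' / 4 + 1) / (-r' / 4 + 1) := by
        have e1 := ival_add 0 (t / 2) (-r' / 4) hg hhalf.le
        rw [add_zero, Real.one_rpow] at e1
        rw [e1]
        have e2 : (1 + t / 2) ^ (-r' / 4 + 1) ≤ t ^ (-r' / 4 + 1) :=
          Real.rpow_le_rpow (by linarith) (by linarith) (by linarith)
        apply (div_le_div_iff_of_pos_right (by linarith)).mpr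
        linarith
      have hJnn : 0 ≤ t ^ (-r' / 4 + 1) / (-r' / 4 + 1) :=
        div_nonneg (Real.rpow_nonneg ht0.le _) (by linarith)
      calc ∫ s in Ioc (0:ℝ) (t / 2), F s
          ≤ ∫ s in Ioc (0:ℝ) (t / 2), KA * (1 + s) ^ (-r' / 4) :=
            setIntegral_mono_on hIA hgint measurableSet_Ioc hle
        _ = KA * ∫ s in Ioc (0:ℝ) (t / 2), (1 + s) ^ (-r' / 4) := integral_const_mul _ _
        _ ≤ KA * (t ^ (-r' / 4 + 1) / (-r' / 4 + 1)) :=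
            mul_le_mul_of_nonneg_left hJ hKAnn
        _ ≤ 4 * t ^ (-r') * (t ^ (-r' / 4 + 1) / (-r' / 4 + 1)) :=
            mul_le_mul_of_nonneg_right hKAle hJnn
    ------------------------------------------------------------------ piece B
    have hB : ∫ s in Ioc (t / 2) (t - 1), F s
        ≤ (t / 2) ^ (-r' / 4) * (1 / (r' - 1)) := by
      have hgint : IntegrableOn (fun s => (t / 2) ^ (-r' / 4) * (t - s) ^ (-r'))
          (Ioc (t / 2) (t - 1)) :=
        (intOn_sub' t (t / 2) (t - 1) (-r') hsplit1 (by linarith)).const_mul _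
      have hle : ∀ s ∈ Ioc (t / 2) (t - 1),
          F s ≤ (t / 2) ^ (-r' / 4) * (t - s) ^ (-r') := by
        intro s hs
        have hts : (0:ℝ) < t - s := by linarith [hs.2]
        have hb1 : (1 + (t - s)) ^ (-r' / 2) ≤ (t - s) ^ (-r' / 2) :=
          Real.rpow_le_rpow_of_nonpos hts (by linarith) hbneg
        have hAB : (t - s) ^ (-r' / 2) * (1 + (t - s)) ^ (-r' / 2) ≤ (t - s) ^ (-r') := by
          have := mul_le_mul_of_nonneg_left hb1 (Real.rpow_nonneg hts.le (-r' / 2))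
          calc (t - s) ^ (-r' / 2) * (1 + (t - s)) ^ (-r' / 2)
              ≤ (t - s) ^ (-r' / 2) * (t - s) ^ (-r' / 2) := this
            _ = (t - s) ^ (-r') := by
                rw [← Real.rpow_add hts, show -r' / 2 + -r' / 2 = -r' by ring]
        have hb2 : (1 + s) ^ (-r' / 4) ≤ (t / 2) ^ (-r' / 4) :=
          Real.rpow_le_rpow_of_nonpos hhalf (by linarith [hs.1]) hgneg
        have hCnn : (0:ℝ) ≤ (1 + s) ^ (-r' / 4) :=
          Real.rpow_nonneg (by linarith [hs.1, hhalf]) _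
        calc F s ≤ (t - s) ^ (-r') * (t / 2) ^ (-r' / 4) :=
              mul_le_mul hAB hb2 hCnn (Real.rpow_nonneg hts.le _)
          _ = (t / 2) ^ (-r' / 4) * (t - s) ^ (-r') := by ring
      have hval : ∫ s in Ioc (t / 2) (t - 1), (t - s) ^ (-r') ≤ 1 / (r' - 1) := by
        have e1 := ival_sub' t (t / 2) (t - 1) (-r')
          (ne_of_lt (by linarith : -r' < -1)) hsplit1 (by linarith)
        rw [show t - t / 2 = t / 2 by ring, show t - (t - 1) = (1:ℝ) by ring,
          Real.one_rpow] at e1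
        rw [e1]
        have hq1 : (t / 2) ^ (-r' + 1) ≤ 1 :=
          Real.rpow_le_one_of_one_le_of_nonpos hhalf1 (by linarith)
        have hq0 : (0:ℝ) ≤ (t / 2) ^ (-r' + 1) := Real.rpow_nonneg hhalf.le _
        have e2 : ((t / 2) ^ (-r' + 1) - 1) / (-r' + 1)
            = (1 - (t / 2) ^ (-r' + 1)) / (r' - 1) := by
          rw [← neg_div_neg_eq]; ring_nf
        rw [e2]
        apply (div_le_div_iff_of_pos_right hd3).mpr
        linarith
      have hknn : (0:ℝ) ≤ (t / 2) ^ (-r' / 4) := Real.rpow_nonneg hhalf.le _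
      calc ∫ s in Ioc (t / 2) (t - 1), F s
          ≤ ∫ s in Ioc (t / 2) (t - 1), (t / 2) ^ (-r' / 4) * (t - s) ^ (-r') :=
            setIntegral_mono_on hIB hgint measurableSet_Ioc hle
        _ = (t / 2) ^ (-r' / 4) * ∫ s in Ioc (t / 2) (t - 1), (t - s) ^ (-r') :=
            integral_const_mul _ _
        _ ≤ (t / 2) ^ (-r' / 4) * (1 / (r' - 1)) :=
            mul_le_mul_of_nonneg_left hval hknn
    ------------------------------------------------------------------ piece C
    have hC : ∫ s in Ioo (t - 1) t, F s
        ≤ t ^ (-r' / 4) * (1 / (-r' / 2 + 1)) := by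
      have hgint : IntegrableOn (fun s => t ^ (-r' / 4) * (t - s) ^ (-r' / 2))
          (Ioo (t - 1) t) :=
        ((intOn_sub t (t - 1) t (-r' / 2) hb (by linarith)).mono_set
          Ioo_subset_Ioc_self).const_mul _
      have hle : ∀ s ∈ Ioo (t - 1) t,
          F s ≤ t ^ (-r' / 4) * (t - s) ^ (-r' / 2) := by
        intro s hs
        have hts : (0:ℝ) < t - s := by linarith [hs.2]
        have hAnn : (0:ℝ) ≤ (t - s) ^ (-r' / 2) := Real.rpow_nonneg hts.le _
        have hBle : (1 + (t - s)) ^ (-r' / 2) ≤ 1 :=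
          Real.rpow_le_one_of_one_le_of_nonpos (by linarith) hbneg
        have hBnn : (0:ℝ) ≤ (1 + (t - s)) ^ (-r' / 2) :=
          Real.rpow_nonneg (by linarith) _
        have hc2 : (1 + s) ^ (-r' / 4) ≤ t ^ (-r' / 4) :=
          Real.rpow_le_rpow_of_nonpos ht0 (by linarith [hs.1]) hgneg
        have hCnn : (0:ℝ) ≤ (1 + s) ^ (-r' / 4) :=
          Real.rpow_nonneg (by linarith [hs.1, h0t1]) _
        calc F s ≤ ((t - s) ^ (-r' / 2) * 1) * t ^ (-r' / 4) :=
              mul_le_mul (mul_le_mul le_rfl hBle hBnn hAnn) hc2 hCnn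
                (by simpa using hAnn)
          _ = t ^ (-r' / 4) * (t - s) ^ (-r' / 2) := by ring
      have hval : ∫ s in Ioo (t - 1) t, (t - s) ^ (-r' / 2) = 1 / (-r' / 2 + 1) := by
        rw [← integral_Ioc_eq_integral_Ioo, ival_sub t (t - 1) t (-r' / 2) hb (by linarith),
          show t - (t - 1) = (1:ℝ) by ring, Real.one_rpow, sub_self,
          Real.zero_rpow (by linarith : -r' / 2 + 1 ≠ 0), sub_zero]
      have hknn : (0:ℝ) ≤ t ^ (-r' / 4) := Real.rpow_nonneg ht0.le _
      calc ∫ s in Ioo (t - 1) t, F s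
          ≤ ∫ s in Ioo (t - 1) t, t ^ (-r' / 4) * (t - s) ^ (-r' / 2) :=
            setIntegral_mono_on hIC hgint measurableSet_Ioo hle
        _ = t ^ (-r' / 4) * ∫ s in Ioo (t - 1) t, (t - s) ^ (-r' / 2) :=
            integral_const_mul _ _
        _ = t ^ (-r' / 4) * (1 / (-r' / 2 + 1)) := by rw [hval]
    ---------------------------------------------------------------- combine
    have hP2 : (0:ℝ) ≤ 2 * t ^ (r' / 4) := by positivity
    have boundA : (1 + t) ^ (r' / 4) * ∫ s in Ioc (0:ℝ) (t / 2), F s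
        ≤ 8 / (1 - r' / 4) := by
      have step : (1 + t) ^ (r' / 4) * ∫ s in Ioc (0:ℝ) (t / 2), F s
          ≤ (2 * t ^ (r' / 4)) * (4 * t ^ (-r') * (t ^ (-r' / 4 + 1) / (-r' / 4 + 1))) :=
        mul_le_mul hpre hA hnnA hP2
      have hexp : t ^ (r' / 4) * (t ^ (-r') * t ^ (-r' / 4 + 1)) = t ^ (1 - r') := by
        rw [← Real.rpow_add ht0, ← Real.rpow_add ht0]
        congr 1; ring
      have hfin : (2 * t ^ (r' / 4)) * (4 * t ^ (-r') * (t ^ (-r' / 4 + 1) / (-r' / 4 + 1)))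
          ≤ 8 / (1 - r' / 4) := by
        have e1 : (2 * t ^ (r' / 4)) * (4 * t ^ (-r') * (t ^ (-r' / 4 + 1) / (-r' / 4 + 1)))
            = 8 / (-r' / 4 + 1) * (t ^ (r' / 4) * (t ^ (-r') * t ^ (-r' / 4 + 1))) := by
          ring
        rw [e1, hexp]
        have ht1le : t ^ (1 - r') ≤ 1 :=
          Real.rpow_le_one_of_one_le_of_nonpos (by linarith) (by linarith)
        calc 8 / (-r' / 4 + 1) * t ^ (1 - r') ≤ 8 / (-r' / 4 + 1) * 1 :=
              mul_le_mul_of_nonneg_left ht1le (div_nonneg (by norm_num) (by linarith))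
          _ = 8 / (1 - r' / 4) := by rw [mul_one, show -r' / 4 + 1 = 1 - r' / 4 by ring]
      linarith
    have boundB : (1 + t) ^ (r' / 4) * ∫ s in Ioc (t / 2) (t - 1), F s
        ≤ 4 / (r' - 1) := by
      have hBle2 : (t / 2) ^ (-r' / 4) * (1 / (r' - 1))
          ≤ 2 * t ^ (-r' / 4) * (1 / (r' - 1)) := by
        apply mul_le_mul_of_nonneg_right _ (by positivity)
        calc (t / 2) ^ (-r' / 4) = t ^ (-r' / 4) * (2:ℝ) ^ (r' / 4) := by
              rw [Real.div_rpow ht0.le (by norm_num : (0:ℝ) ≤ 2),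
                show -r' / 4 = -(r' / 4) by ring,
                Real.rpow_neg (by norm_num : (0:ℝ) ≤ 2), div_eq_mul_inv, inv_inv,
                show -(r' / 4) = -r' / 4 by ring]
          _ ≤ t ^ (-r' / 4) * 2 :=
              mul_le_mul_of_nonneg_left h2le (Real.rpow_nonneg ht0.le _)
          _ = 2 * t ^ (-r' / 4) := by ring
      have step : (1 + t) ^ (r' / 4) * ∫ s in Ioc (t / 2) (t - 1), F s
          ≤ (2 * t ^ (r' / 4)) * (2 * t ^ (-r' / 4) * (1 / (r' - 1))) :=
        mul_le_mul hpre (le_trans hB hBle2) hnnB hP2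
      have hexp : t ^ (r' / 4) * t ^ (-r' / 4) = 1 := by
        rw [← Real.rpow_add ht0, show r' / 4 + -r' / 4 = 0 by ring, Real.rpow_zero]
      have e1 : (2 * t ^ (r' / 4)) * (2 * t ^ (-r' / 4) * (1 / (r' - 1)))
          = 4 / (r' - 1) * (t ^ (r' / 4) * t ^ (-r' / 4)) := by ring
      rw [e1, hexp, mul_one] at step
      exact step
    have boundC : (1 + t) ^ (r' / 4) * ∫ s in Ioo (t - 1) t, F s
        ≤ 2 / (1 - r' / 2) := by
      have step : (1 + t) ^ (r' / 4) * ∫ s in Ioo (t - 1) t, F s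
          ≤ (2 * t ^ (r' / 4)) * (t ^ (-r' / 4) * (1 / (-r' / 2 + 1))) :=
        mul_le_mul hpre hC hnnC hP2
      have hexp : t ^ (r' / 4) * t ^ (-r' / 4) = 1 := by
        rw [← Real.rpow_add ht0, show r' / 4 + -r' / 4 = 0 by ring, Real.rpow_zero]
      have e1 : (2 * t ^ (r' / 4)) * (t ^ (-r' / 4) * (1 / (-r' / 2 + 1)))
          = 2 / (-r' / 2 + 1) * (t ^ (r' / 4) * t ^ (-r' / 4)) := by ring
      rw [e1, hexp, mul_one] at step
      calc (1 + t) ^ (r' / 4) * ∫ s in Ioo (t - 1) t, F s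
          ≤ 2 / (-r' / 2 + 1) := step
        _ = 2 / (1 - r' / 2) := by rw [show -r' / 2 + 1 = 1 - r' / 2 by ring]
    rw [hsplit, mul_add, mul_add]
    linarith
end

section
/- There exists a constant C > 0 such that for every t ≥ 0, (1+t)^{1/4} ∫_0^t (t−s)^{−1/2} (1+(t−s))^{−1/2} (1+s)^{−3/4} ds ≤ C. -/
open MeasureTheory Real Set intervalIntegral

private lemma rpow_sub_integrableOn (t a r : ℝ) (hr : -1 < r) (hat : a ≤ t) :
    IntegrableOn (fun s : ℝ => (t - s) ^ r) (Set.Ioo a t) := by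
  have h : IntervalIntegrable (fun x : ℝ => x ^ r) volume 0 (t - a) :=
    intervalIntegral.intervalIntegrable_rpow' hr
  have h2 := h.comp_sub_left t
  rw [sub_zero, sub_sub_cancel] at h2
  exact (intervalIntegrable_iff_integrableOn_Ioo_of_le hat).1 h2.symm

private lemma sqrt_one_add_le (u : ℝ) (hu : 0 ≤ u) : Real.sqrt (1 + u) ≤ 1 + Real.sqrt u := by
  have h := Real.sqrt_le_sqrt (show 1 + u ≤ (1 + Real.sqrt u) ^ 2 by
    nlinarith [Real.sq_sqrt hu, Real.sqrt_nonneg u])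
  rwa [Real.sqrt_sq (by positivity)] at h

private lemma ptwise (t s : ℝ) (hs0 : 0 < s) (hst : s < t) :
    (1 + t) ^ ((1 : ℝ) / 4) *
      ((t - s) ^ (-(1 : ℝ) / 2) * (1 + (t - s)) ^ (-(1 : ℝ) / 2) * (1 + s) ^ (-(3 : ℝ) / 4)) ≤
    (t - s) ^ (-(1 : ℝ) / 2) * (1 + s) ^ (-(1 : ℝ) / 2) := by
  have hapos : 0 < t - s := by linarith
  have h1a : (0 : ℝ) < 1 + (t - s) := by linarith
  have h1s : (0 : ℝ) < 1 + s := by linarith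
  have key : (1 + t) ^ ((1 : ℝ) / 4) ≤
      (1 + (t - s)) ^ ((1 : ℝ) / 4) * (1 + s) ^ ((1 : ℝ) / 4) := by
    rw [← Real.mul_rpow h1a.le h1s.le]
    exact Real.rpow_le_rpow (by linarith) (by nlinarith) (by norm_num)
  have hnn : 0 ≤ (t - s) ^ (-(1 : ℝ) / 2) * (1 + (t - s)) ^ (-(1 : ℝ) / 2) *
      (1 + s) ^ (-(3 : ℝ) / 4) := by positivity
  calc (1 + t) ^ ((1 : ℝ) / 4) *
        ((t - s) ^ (-(1 : ℝ) / 2) * (1 + (t - s)) ^ (-(1 : ℝ) / 2) * (1 + s) ^ (-(3 : ℝ) / 4))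
      ≤ ((1 + (t - s)) ^ ((1 : ℝ) / 4) * (1 + s) ^ ((1 : ℝ) / 4)) *
        ((t - s) ^ (-(1 : ℝ) / 2) * (1 + (t - s)) ^ (-(1 : ℝ) / 2) *
          (1 + s) ^ (-(3 : ℝ) / 4)) :=
        mul_le_mul_of_nonneg_right key hnn
    _ = (t - s) ^ (-(1 : ℝ) / 2) *
          ((1 + (t - s)) ^ ((1 : ℝ) / 4) * (1 + (t - s)) ^ (-(1 : ℝ) / 2)) *
          ((1 + s) ^ ((1 : ℝ) / 4) * (1 + s) ^ (-(3 : ℝ) / 4)) := by ring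
    _ = (t - s) ^ (-(1 : ℝ) / 2) * (1 + (t - s)) ^ (-(1 : ℝ) / 4) *
          (1 + s) ^ (-(1 : ℝ) / 2) := by
        rw [← Real.rpow_add h1a, ← Real.rpow_add h1s]; norm_num
    _ ≤ (t - s) ^ (-(1 : ℝ) / 2) * 1 * (1 + s) ^ (-(1 : ℝ) / 2) := by
        have h1 : (1 + (t - s)) ^ (-(1 : ℝ) / 4) ≤ 1 :=
          Real.rpow_le_one_of_one_le_of_nonpos (by linarith) (by norm_num)
        have h2 : 0 ≤ (t - s) ^ (-(1 : ℝ) / 2) := Real.rpow_nonneg hapos.le _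
        have h3 : 0 ≤ (1 + s) ^ (-(1 : ℝ) / 2) := Real.rpow_nonneg h1s.le _
        exact mul_le_mul_of_nonneg_right (mul_le_mul_of_nonneg_left h1 h2) h3
    _ = (t - s) ^ (-(1 : ℝ) / 2) * (1 + s) ^ (-(1 : ℝ) / 2) := by ring

/-- Uniform-in-time convolution estimate:
`(1+t)^{1/4} ∫_0^t (t-s)^{-1/2} (1+(t-s))^{-1/2} (1+s)^{-3/4} ds ≤ C`. -/
theorem stmt_13 :
    ∃ C : ℝ, 0 < C ∧ ∀ t : ℝ, 0 ≤ t →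
      (1 + t) ^ ((1 : ℝ) / 4) *
          ∫ s in Set.Ioo (0 : ℝ) t,
            (t - s) ^ (-(1 : ℝ) / 2) * (1 + (t - s)) ^ (-(1 : ℝ) / 2) *
              (1 + s) ^ (-(3 : ℝ) / 4) ≤ C := by
  refine ⟨4, by norm_num, fun t ht => ?_⟩
  rcases eq_or_lt_of_le ht with rfl | htpos
  · simp
  set G : ℝ → ℝ := fun s => (t - s) ^ (-(1 : ℝ) / 2) * (1 + s) ^ (-(1 : ℝ) / 2) with hG
  have hmid : t / 2 < t := by linarith
  have hmid0 : (0 : ℝ) < t / 2 := by linarith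
  have hGmeas : Measurable G := by
    exact ((measurable_const.sub measurable_id).pow measurable_const).mul
      ((measurable_const.add measurable_id).pow measurable_const)
  -- majorant on the first piece
  set h₁ : ℝ → ℝ := fun s => (t / 2) ^ (-(1 : ℝ) / 2) * (1 + s) ^ (-(1 : ℝ) / 2) with hh₁
  have hcont : ContinuousOn (fun s : ℝ => (1 + s) ^ (-(1 : ℝ) / 2)) (Icc 0 (t / 2)) := by
    apply ContinuousOn.rpow_const (continuous_const.add continuous_id).continuousOn
    intro x hx
    exact Or.inl (show (1:ℝ) + x ≠ 0 by have := hx.1; positivity)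
  have hint1' : IntegrableOn (fun s : ℝ => (1 + s) ^ (-(1 : ℝ) / 2)) (Ioc 0 (t / 2)) :=
    (hcont.integrableOn_Icc).mono_set Ioc_subset_Icc_self
  have hinth₁ : IntegrableOn h₁ (Ioc 0 (t / 2)) := hint1'.const_mul _
  -- G ≤ h₁ on the first piece
  have hGh₁ : ∀ s ∈ Ioc (0 : ℝ) (t / 2), G s ≤ h₁ s := by
    intro s hs
    have h1 : (t - s) ^ (-(1 : ℝ) / 2) ≤ (t / 2) ^ (-(1 : ℝ) / 2) :=
      Real.rpow_le_rpow_of_nonpos hmid0 (by linarith [hs.2]) (by norm_num)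
    exact mul_le_mul_of_nonneg_right h1 (Real.rpow_nonneg (by linarith [hs.1]) _)
  have hGnn1 : ∀ s ∈ Ioc (0 : ℝ) (t / 2), 0 ≤ G s := fun s hs => by
    have h1 : (0:ℝ) ≤ t - s := by linarith [hs.2]
    have h2 : (0:ℝ) ≤ 1 + s := by linarith [hs.1]
    exact mul_nonneg (Real.rpow_nonneg h1 _) (Real.rpow_nonneg h2 _)
  have hintG1 : IntegrableOn G (Ioc 0 (t / 2)) := by
    refine Integrable.mono' hinth₁ (hGmeas.aestronglyMeasurable.restrict) ?_
    rw [ae_restrict_iff' measurableSet_Ioc]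
    exact ae_of_all _ fun s hs => by
      rw [Real.norm_of_nonneg (hGnn1 s hs)]; exact hGh₁ s hs
  -- majorant on the second piece
  set h₂ : ℝ → ℝ := fun s => (t - s) ^ (-(1 : ℝ) / 2) * (1 + t / 2) ^ (-(1 : ℝ) / 2) with hh₂
  have hint2' : IntegrableOn (fun s : ℝ => (t - s) ^ (-(1 : ℝ) / 2)) (Ioo (t / 2) t) :=
    rpow_sub_integrableOn t (t / 2) _ (by norm_num) hmid.le
  have hinth₂ : IntegrableOn h₂ (Ioo (t / 2) t) := hint2'.mul_const _
  have hGh₂ : ∀ s ∈ Ioo (t / 2) t, G s ≤ h₂ s := by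
    intro s hs
    have h1 : (1 + s) ^ (-(1 : ℝ) / 2) ≤ (1 + t / 2) ^ (-(1 : ℝ) / 2) :=
      Real.rpow_le_rpow_of_nonpos (by linarith) (by linarith [hs.1]) (by norm_num)
    exact mul_le_mul_of_nonneg_left h1 (Real.rpow_nonneg (by linarith [hs.2]) _)
  have hGnn2 : ∀ s ∈ Ioo (t / 2) t, 0 ≤ G s := fun s hs => by
    have h1 : (0:ℝ) ≤ t - s := by linarith [hs.2]
    have h2 : (0:ℝ) ≤ 1 + s := by linarith [hs.1]
    exact mul_nonneg (Real.rpow_nonneg h1 _) (Real.rpow_nonneg h2 _)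
  have hintG2 : IntegrableOn G (Ioo (t / 2) t) := by
    refine Integrable.mono' hinth₂ (hGmeas.aestronglyMeasurable.restrict) ?_
    rw [ae_restrict_iff' measurableSet_Ioo]
    exact ae_of_all _ fun s hs => by
      rw [Real.norm_of_nonneg (hGnn2 s hs)]; exact hGh₂ s hs
  have hunion : Ioc (0 : ℝ) (t / 2) ∪ Ioo (t / 2) t = Ioo 0 t :=
    Set.Ioc_union_Ioo_eq_Ioo hmid0.le hmid
  have hintG : IntegrableOn G (Ioo 0 t) := by
    rw [← hunion]; exact hintG1.union hintG2
  -- step 1: pull the constant in and compare with G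
  have step1 : (1 + t) ^ ((1 : ℝ) / 4) *
      (∫ s in Set.Ioo (0 : ℝ) t,
        (t - s) ^ (-(1 : ℝ) / 2) * (1 + (t - s)) ^ (-(1 : ℝ) / 2) * (1 + s) ^ (-(3 : ℝ) / 4)) ≤
      ∫ s in Set.Ioo (0 : ℝ) t, G s := by
    rw [← MeasureTheory.integral_const_mul]
    refine integral_mono_of_nonneg ?_ hintG ?_
    · filter_upwards [ae_restrict_mem measurableSet_Ioo] with s hs
      have h1 : (0:ℝ) ≤ t - s := by linarith [hs.2]
      have h2 : (0:ℝ) ≤ 1 + s := by linarith [hs.1]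
      have h3 : (0:ℝ) ≤ 1 + (t - s) := by linarith
      have h4 : (0:ℝ) ≤ 1 + t := by linarith
      exact mul_nonneg (Real.rpow_nonneg h4 _) (mul_nonneg (mul_nonneg
        (Real.rpow_nonneg h1 _) (Real.rpow_nonneg h3 _)) (Real.rpow_nonneg h2 _))
    · filter_upwards [ae_restrict_mem measurableSet_Ioo] with s hs
      exact ptwise t s hs.1 hs.2
  -- split the integral of G
  have hdisj : Disjoint (Ioc (0 : ℝ) (t / 2)) (Ioo (t / 2) t) := by
    refine Set.disjoint_left.2 fun s hs1 hs2 => ?_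
    exact absurd hs1.2 (not_le.2 hs2.1)
  have hsplit : ∫ s in Set.Ioo (0 : ℝ) t, G s =
      (∫ s in Ioc (0 : ℝ) (t / 2), G s) + ∫ s in Ioo (t / 2) t, G s := by
    rw [← hunion]
    exact setIntegral_union hdisj measurableSet_Ioo hintG1 hintG2
  -- first piece estimate
  have hsq : Real.sqrt (t / 2) > 0 := Real.sqrt_pos.2 hmid0
  have int1val : ∫ s in Ioc (0 : ℝ) (t / 2), (1 + s) ^ (-(1 : ℝ) / 2) =
      2 * ((1 + t / 2) ^ ((1 : ℝ) / 2) - 1) := by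
    rw [← intervalIntegral.integral_of_le hmid0.le]
    have := intervalIntegral.integral_comp_add_left (a := (0:ℝ)) (b := t / 2)
      (fun x : ℝ => x ^ (-(1 : ℝ) / 2)) 1
    rw [this, integral_rpow (Or.inl (by norm_num)), add_zero]
    norm_num
    ring
  have piece1 : (∫ s in Ioc (0 : ℝ) (t / 2), G s) ≤ 2 := by
    have h1 : (∫ s in Ioc (0 : ℝ) (t / 2), G s) ≤ ∫ s in Ioc (0 : ℝ) (t / 2), h₁ s :=
      setIntegral_mono_on hintG1 hinth₁ measurableSet_Ioc hGh₁
    have h2 : (∫ s in Ioc (0 : ℝ) (t / 2), h₁ s) =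
        (t / 2) ^ (-(1 : ℝ) / 2) * (2 * ((1 + t / 2) ^ ((1 : ℝ) / 2) - 1)) := by
      simp only [hh₁]
      rw [MeasureTheory.integral_const_mul, int1val]
    have e1 : (t / 2) ^ (-(1 : ℝ) / 2) = (Real.sqrt (t / 2))⁻¹ := by
      rw [show (-(1:ℝ)/2) = -(1/2) by norm_num, Real.rpow_neg hmid0.le,
        ← Real.sqrt_eq_rpow]
    have e2 : (1 + t / 2) ^ ((1 : ℝ) / 2) = Real.sqrt (1 + t / 2) :=
      (Real.sqrt_eq_rpow _).symm
    have h3 : Real.sqrt (1 + t / 2) ≤ 1 + Real.sqrt (t / 2) :=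
      sqrt_one_add_le _ hmid0.le
    refine le_trans h1 ?_
    rw [h2, e1, e2]
    rw [inv_mul_le_iff₀ hsq]
    nlinarith [hsq]
  -- second piece estimate
  have int2val : ∫ s in Ioo (t / 2) t, (t - s) ^ (-(1 : ℝ) / 2) =
      2 * (t / 2) ^ ((1 : ℝ) / 2) := by
    rw [← integral_Ioc_eq_integral_Ioo, ← intervalIntegral.integral_of_le hmid.le]
    have := intervalIntegral.integral_comp_sub_left (a := t / 2) (b := t)
      (fun x : ℝ => x ^ (-(1 : ℝ) / 2)) t
    rw [this, sub_self, show t - t / 2 = t / 2 by ring,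
      integral_rpow (Or.inl (by norm_num))]
    rw [Real.zero_rpow (by norm_num)]
    norm_num
    ring
  have piece2 : (∫ s in Ioo (t / 2) t, G s) ≤ 2 := by
    have h1 : (∫ s in Ioo (t / 2) t, G s) ≤ ∫ s in Ioo (t / 2) t, h₂ s :=
      setIntegral_mono_on hintG2 hinth₂ measurableSet_Ioo hGh₂
    have h2 : (∫ s in Ioo (t / 2) t, h₂ s) =
        (2 * (t / 2) ^ ((1 : ℝ) / 2)) * (1 + t / 2) ^ (-(1 : ℝ) / 2) := by
      simp only [hh₂]
      rw [MeasureTheory.integral_mul_const, int2val]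
    have e1 : (1 + t / 2) ^ (-(1 : ℝ) / 2) = (Real.sqrt (1 + t / 2))⁻¹ := by
      rw [show (-(1:ℝ)/2) = -(1/2) by norm_num, Real.rpow_neg (by linarith),
        ← Real.sqrt_eq_rpow]
    have e2 : (t / 2) ^ ((1 : ℝ) / 2) = Real.sqrt (t / 2) :=
      (Real.sqrt_eq_rpow _).symm
    have hsq2 : (0:ℝ) < Real.sqrt (1 + t / 2) := Real.sqrt_pos.2 (by linarith)
    have h3 : Real.sqrt (t / 2) ≤ Real.sqrt (1 + t / 2) :=
      Real.sqrt_le_sqrt (by linarith)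
    refine le_trans h1 ?_
    rw [h2, e1, e2]
    rw [mul_inv_le_iff₀ hsq2]
    nlinarith
  linarith [step1, hsplit ▸ (add_le_add piece1 piece2)]
end
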